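/- arXiv:2605.09871 — 12 statements merged into one kernel-verified Lean document; each statement's English description precedes it below -/
import Mathlib

section
/- Let p be a prime, α ≥ 1 and m ≥ 1 integers with p ∤ m, and set N = p^α · m. Suppose the set {1, 2, …, k} splits ℤ_N with splitter set S. Then (k − ⌊k/p⌋) · |{s ∈ S : p^α divides the additive order of s}| = p^{α−1} · (p − 1) · m. -/
/-- `S ⊆ G` is a splitter set for the multiplier set `{1, 2, …, k}` in the finite
abelian group `G`: every nonzero `g ∈ G` has a unique representation `g = m • s`
with `m ∈ {1, …, k}` and `s ∈ S`. -/
def IsSplitting {G : Type*} [AddCommGroup G] (k : ℕ) (S : Set G) : Prop :=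
  ∀ g : G, g ≠ 0 → ∃! ms : ℤ × G,
    ms.1 ∈ Set.Icc (1 : ℤ) (k : ℤ) ∧ ms.2 ∈ S ∧ ms.1 • ms.2 = g

/-- `S` is a splitter set for `{1, …, k}` in `G`, and the splitting is purely
singular: every prime divisor of `|G|` divides some multiplier `m ∈ {1, …, k}`. -/
def IsPurelySingularSplitting {G : Type*} [AddCommGroup G] (k : ℕ) (S : Set G) : Prop :=
  IsSplitting k S ∧
    ∀ q : ℕ, q.Prime → q ∣ Nat.card G →
      ∃ m : ℤ, m ∈ Set.Icc (1 : ℤ) (k : ℤ) ∧ (q : ℤ) ∣ m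

/-- Helper: if `p^α ∣ c`, `c ∣ p^α * m`, `p ∤ m` and `p ∤ n`, then
`p^α ∣ c / gcd c n`. -/
lemma aux_div_gcd (p α m c n : ℕ) (hp : p.Prime)
    (hpm : ¬ p ∣ m) (hc : p ^ α ∣ c) (hcN : c ∣ p ^ α * m) (hn : ¬ p ∣ n) :
    p ^ α ∣ c / Nat.gcd c n := by
  have hg : ¬ p ∣ Nat.gcd c n := fun hd => hn (hd.trans (Nat.gcd_dvd_right c n))
  have hcop : Nat.Coprime (Nat.gcd c n) (p ^ α) :=
    (Nat.Prime.coprime_iff_not_dvd hp).mpr hg |>.symm.pow_right α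
  obtain ⟨t, ht⟩ := hc
  have hgt : Nat.gcd c n ∣ t := by
    have h1 : Nat.gcd c n ∣ p ^ α * t := by
      rw [← ht]; exact Nat.gcd_dvd_left c n
    exact hcop.dvd_of_dvd_mul_left h1
  set g := Nat.gcd c n with hgdef
  have : c / g = p ^ α * (t / g) := by
    rw [ht, Nat.mul_div_assoc _ hgt]
  rw [this]; exact Dvd.intro _ rfl

/-- Helper: conversely, if `c ∣ p^α * m`, `p ∤ m`, `1 ≤ α`, and
`p^α ∣ c / gcd c n`, then `p^α ∣ c` and `p ∤ n`. -/
lemma aux_div_gcd_rev (p α m c n : ℕ) (hp : p.Prime) (hα : 1 ≤ α)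
    (hpm : ¬ p ∣ m) (hcN : c ∣ p ^ α * m) (h : p ^ α ∣ c / Nat.gcd c n) :
    p ^ α ∣ c ∧ ¬ p ∣ n := by
  have hgc : Nat.gcd c n ∣ c := Nat.gcd_dvd_left c n
  have hdvd : c / Nat.gcd c n ∣ c := Nat.div_dvd_of_dvd hgc
  have hpac : p ^ α ∣ c := h.trans hdvd
  refine ⟨hpac, fun hpn => ?_⟩
  have hpc : p ∣ c := (dvd_pow_self p (Nat.one_le_iff_ne_zero.mp hα)).trans hpac
  have hpg : p ∣ Nat.gcd c n := Nat.dvd_gcd hpc hpn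
  have h1 : p ^ α * p ∣ (c / Nat.gcd c n) * Nat.gcd c n := mul_dvd_mul h hpg
  rw [Nat.div_mul_cancel hgc] at h1
  have h2 : p ^ α * p ∣ p ^ α * m := h1.trans hcN
  have : p ∣ m := (mul_dvd_mul_iff_left (a := p ^ α)
    ((pow_pos hp.pos α).ne' : (p:ℕ) ^ α ≠ 0)).mp h2
  exact hpm this

/-- Counting non-multiples of `p` below `N`, when `p ∣ N`. -/
lemma aux_count_range (p N : ℕ) (hp : p.Prime) (hpN : p ∣ N) :
    ((Finset.range N).filter (fun a => ¬ p ∣ a)).card = N - N / p := by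
  classical
  have himg : (Finset.range N).filter (fun a => p ∣ a)
      = (Finset.range (N / p)).image (fun j => p * j) := by
    ext x
    simp only [Finset.mem_filter, Finset.mem_range, Finset.mem_image]
    constructor
    · rintro ⟨hx, j, rfl⟩
      exact ⟨j, by
        have := Nat.div_lt_div_of_lt_of_dvd hpN (by omega : p * j < N)
        rwa [Nat.mul_div_cancel_left j hp.pos] at this, rfl⟩
    · rintro ⟨j, hj, rfl⟩
      refine ⟨?_, Dvd.intro _ rfl⟩
      calc p * j < p * (N / p) := by
            exact (Nat.mul_lt_mul_left hp.pos).mpr hj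
        _ = N := Nat.mul_div_cancel' hpN
  have hmul : ((Finset.range N).filter (fun a => p ∣ a)).card = N / p := by
    rw [himg, Finset.card_image_of_injective _
      (mul_right_injective₀ hp.ne_zero), Finset.card_range]
  have := Finset.card_filter_add_card_filter_not
    (s := Finset.range N) (p := fun a => p ∣ a)
  rw [Finset.card_range, hmul] at this
  omega

/-- Counting non-multiples of `p` in `{1, …, k}`. -/
lemma aux_count_Icc (p k : ℕ) (hp : p.Prime) :
    ((Finset.Icc 1 k).filter (fun a => ¬ p ∣ a)).card = k - k / p := by
  classical
  have hI : Finset.Icc 1 k = Finset.Ioc 0 k := by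
    ext x; simp [Nat.lt_iff_add_one_le]
  have hmul : ((Finset.Icc 1 k).filter (fun a => p ∣ a)).card = k / p := by
    rw [hI]; exact Nat.Ioc_filter_dvd_card_eq_div k p
  have := Finset.card_filter_add_card_filter_not
    (s := Finset.Icc 1 k) (p := fun a => p ∣ a)
  rw [Nat.card_Icc, hmul] at this
  simp only [Nat.add_sub_cancel] at this
  omega

/-- Counting the elements of order divisible by `p^α` in a splitting of `ℤ_{p^α m}`:
`(k − ⌊k/p⌋) · |S_α| = p^{α−1}(p−1)m`. -/
theorem splitting_count_full_p_order
    (p α m k N : ℕ) (hp : p.Prime) (hα : 1 ≤ α) (hm : 1 ≤ m)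
    (hpm : ¬ p ∣ m) (hN : N = p ^ α * m)
    (S : Finset (ZMod N)) (h : IsSplitting k (S : Set (ZMod N))) :
    (k - k / p) * (S.filter (fun s => p ^ α ∣ addOrderOf s)).card
      = p ^ (α - 1) * (p - 1) * m := by
  classical
  have hN0 : N ≠ 0 := by
    have : 0 < p ^ α * m := Nat.mul_pos (pow_pos hp.pos α) hm
    omega
  haveI : NeZero N := ⟨hN0⟩
  have hpN : p ∣ N := hN ▸ (dvd_pow_self p (Nat.one_le_iff_ne_zero.mp hα)).mul_right m
  have hord_dvd : ∀ g : ZMod N, addOrderOf g ∣ N := by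
    intro g
    have h1 : addOrderOf g ∣ Fintype.card (ZMod N) := addOrderOf_dvd_card
    simpa [ZMod.card] using h1
  have hpα1 : 1 < p ^ α := by
    calc 1 < p := hp.one_lt
      _ ≤ p ^ α := Nat.le_self_pow (by omega) p
  -- the target set of group elements
  set T : Finset (ZMod N) :=
    Finset.univ.filter (fun g => p ^ α ∣ addOrderOf g) with hT
  set A : Finset ℕ := (Finset.Icc 1 k).filter (fun a => ¬ p ∣ a) with hA
  set Sα : Finset (ZMod N) := S.filter (fun s => p ^ α ∣ addOrderOf s) with hSα
  -- nonzero elements of T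
  have hTne : ∀ g : ZMod N, p ^ α ∣ addOrderOf g → g ≠ 0 := by
    intro g hg hg0
    rw [hg0, addOrderOf_zero, Nat.dvd_one] at hg
    omega
  -- main bijection
  have hbij : (A ×ˢ Sα).card = T.card := by
    apply Finset.card_bij (fun x _ => x.1 • x.2)
    · rintro ⟨n, s⟩ hx
      simp only [Finset.mem_product, hA, hSα, Finset.mem_filter] at hx
      obtain ⟨⟨-, hn⟩, -, hs⟩ := hx
      simp only [hT, Finset.mem_filter, Finset.mem_univ, true_and]
      rw [addOrderOf_nsmul]
      exact aux_div_gcd p α m _ n hp hpm hs (hN ▸ hord_dvd s) hn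
    · rintro ⟨n₁, s₁⟩ hx₁ ⟨n₂, s₂⟩ hx₂ heq
      simp only [Finset.mem_product, hA, hSα, Finset.mem_filter,
        Finset.mem_Icc] at hx₁ hx₂
      obtain ⟨⟨⟨hn₁1, hn₁k⟩, hn₁p⟩, hs₁S, hs₁⟩ := hx₁
      obtain ⟨⟨⟨hn₂1, hn₂k⟩, hn₂p⟩, hs₂S, hs₂⟩ := hx₂
      have hgne : n₁ • s₁ ≠ 0 := by
        apply hTne
        rw [addOrderOf_nsmul]
        exact aux_div_gcd p α m _ n₁ hp hpm hs₁ (hN ▸ hord_dvd s₁) hn₁p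
      obtain ⟨w, hw, huniq⟩ := h (n₁ • s₁) hgne
      have e₁ : ((n₁ : ℤ), s₁) = w := huniq _ ⟨by
          simp only [Set.mem_Icc]; exact ⟨by exact_mod_cast hn₁1, by exact_mod_cast hn₁k⟩,
          hs₁S, by simp [natCast_zsmul]⟩
      have e₂ : ((n₂ : ℤ), s₂) = w := huniq _ ⟨by
          simp only [Set.mem_Icc]; exact ⟨by exact_mod_cast hn₂1, by exact_mod_cast hn₂k⟩,
          hs₂S, by simp [natCast_zsmul, heq]⟩
      have := e₁.trans e₂.symm
      have h1 : (n₁ : ℤ) = n₂ := congrArg Prod.fst this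
      have h2 : s₁ = s₂ := congrArg Prod.snd this
      simp only [Prod.mk.injEq]
      exact ⟨by exact_mod_cast h1, h2⟩
    · intro g hg
      simp only [hT, Finset.mem_filter, Finset.mem_univ, true_and] at hg
      obtain ⟨⟨i, s⟩, ⟨hi, hsS, hsmul⟩, -⟩ := h g (hTne g hg)
      simp only [Set.mem_Icc] at hi
      have hi1 : 1 ≤ i := hi.1
      set n : ℕ := i.toNat with hn
      have hin : (n : ℤ) = i := Int.toNat_of_nonneg (by omega)
      have hns : n • s = g := by rw [← hsmul, ← hin, natCast_zsmul]
      have hordg : p ^ α ∣ addOrderOf s / Nat.gcd (addOrderOf s) n := by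
        rw [← addOrderOf_nsmul, hns]; exact hg
      obtain ⟨hps, hpn⟩ := aux_div_gcd_rev p α m _ n hp hα hpm (hN ▸ hord_dvd s) hordg
      refine ⟨(n, s), ?_, hns⟩
      simp only [Finset.mem_product, hA, hSα, Finset.mem_filter, Finset.mem_Icc]
      refine ⟨⟨⟨by omega, ?_⟩, hpn⟩, hsS, hps⟩
      have : (n : ℤ) ≤ (k : ℤ) := hin ▸ hi.2
      exact_mod_cast this
  -- cardinality of T
  have hTval : T.card = N - N / p := by
    rw [← aux_count_range p N hp hpN]
    apply Finset.card_bij (fun g _ => g.val)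
    · intro g hg
      simp only [hT, Finset.mem_filter, Finset.mem_univ, true_and] at hg
      simp only [Finset.mem_filter, Finset.mem_range]
      refine ⟨ZMod.val_lt g, fun hpv => ?_⟩
      -- p ∣ g.val contradicts p^α ∣ addOrderOf g
      have hgv : ((g.val : ℕ) : ZMod N) = g := by
        rw [ZMod.natCast_val, ZMod.cast_id]
      have hord : addOrderOf g = N / N.gcd g.val := by
        conv_lhs => rw [← hgv]
        rw [ZMod.addOrderOf_coe _ hN0]
      rw [hord] at hg
      obtain ⟨-, hcon⟩ := aux_div_gcd_rev p α m N g.val hp hα hpm (dvd_of_eq hN) hg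
      exact hcon hpv
    · intro g₁ _ g₂ _ hval
      exact ZMod.val_injective N hval
    · intro a ha
      simp only [Finset.mem_filter, Finset.mem_range] at ha
      refine ⟨(a : ZMod N), ?_, (ZMod.val_cast_of_lt ha.1)⟩
      simp only [hT, Finset.mem_filter, Finset.mem_univ, true_and]
      rw [ZMod.addOrderOf_coe _ hN0]
      exact aux_div_gcd p α m N a hp hpm (hN ▸ Dvd.intro m rfl) (dvd_of_eq hN) ha.2
  -- finish arithmetic
  have hAcard : A.card = k - k / p := aux_count_Icc p k hp
  have hcard : (A ×ˢ Sα).card = A.card * Sα.card := Finset.card_product A Sα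
  rw [hcard, hAcard, hTval] at hbij
  rw [hbij]
  -- N - N/p = p^(α-1)(p-1)m
  have hNp : N / p = p ^ (α - 1) * m := by
    rw [hN, show p ^ α = p * p ^ (α - 1) by
      rw [← pow_succ']; congr 1; omega]
    rw [mul_assoc, Nat.mul_div_cancel_left _ hp.pos]
  have hpα : p ^ α = p ^ (α - 1) * p := by rw [← pow_succ]; congr 1; omega
  rw [hNp, hN, hpα]
  set x := p ^ (α - 1) with hx
  obtain ⟨q, hq⟩ : ∃ q, p = q + 1 := ⟨p - 1, by have := hp.pos; omega⟩
  subst hq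
  have h1 : x * (q + 1) * m = x * q * m + x * m := by ring
  have h2 : x * (q + 1 - 1) * m = x * q * m := by norm_num
  omega
end

section
/- Let p be a prime, α ≥ 2 and m ≥ 1 integers with p ∤ m, and set N = p^α · m. Suppose the set {1, 2, …, k} splits ℤ_N with splitter set S. For an integer i ≥ 0, let S_i = {s ∈ S : p^i divides the additive order of s but p^{i+1} does not}. Then (k − ⌊k/p⌋) · |S_{α−1}| + (⌊k/p⌋ − ⌊k/p²⌋) · |S_α| = p^{α−2} · (p − 1) · m. -/
open Finset
open scoped Nat

lemma Nat.Prime.pow_dvd_and_not_pow_succ_dvd_iff {p i n : ℕ} (hp : p.Prime) (hn : n ≠ 0) :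
    p ^ i ∣ n ∧ ¬ p ^ (i + 1) ∣ n ↔ n.factorization p = i := by
  rw [hp.pow_dvd_iff_le_factorization hn, hp.pow_dvd_iff_le_factorization hn]
  omega

lemma Nat.factorization_div_gcd {n j : ℕ} (hn : n ≠ 0) (hj : j ≠ 0) :
    (n / n.gcd j).factorization = n.factorization - j.factorization := by
  ext p
  rw [Nat.factorization_div (Nat.gcd_dvd_left n j), Nat.factorization_gcd hn hj]
  simp only [Finsupp.tsub_apply, Finsupp.inf_apply]
  omega

lemma Nat.card_Ioc_filter_factorization_eq {p : ℕ} (hp : p.Prime) (k i : ℕ) :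
    #{j ∈ Ioc 0 k | j.factorization p = i} = k / p ^ i - k / p ^ (i + 1) := by
  have hdiff : {j ∈ Ioc 0 k | j.factorization p = i}
      = {j ∈ Ioc 0 k | p ^ i ∣ j} \ {j ∈ Ioc 0 k | p ^ (i + 1) ∣ j} := by
    ext j
    simp only [mem_filter, mem_sdiff, mem_Ioc]
    by_cases hj : 0 < j
    · rw [← hp.pow_dvd_and_not_pow_succ_dvd_iff hj.ne']
      tauto
    · tauto
  have hsub : {j ∈ Ioc 0 k | p ^ (i + 1) ∣ j} ⊆ {j ∈ Ioc 0 k | p ^ i ∣ j} :=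
    monotone_filter_right _ fun _ _ => (pow_dvd_pow p i.le_succ).trans
  rw [hdiff, card_sdiff_of_subset hsub, Nat.Ioc_filter_dvd_card_eq_div,
    Nat.Ioc_filter_dvd_card_eq_div]

lemma Nat.sum_totient_filter_factorization_eq {p α m i : ℕ} (hp : p.Prime) (hpm : ¬ p ∣ m)
    (hi : i ≤ α) :
    ∑ d ∈ (p ^ α * m).divisors with d.factorization p = i, φ d = φ (p ^ i) * m := by
  have hm : m ≠ 0 := by rintro rfl; exact hpm (dvd_zero p)
  have hN : p ^ α * m ≠ 0 := Nat.mul_ne_zero (pow_ne_zero _ hp.ne_zero) hm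
  have hcop : ∀ t, t ∣ m → (p ^ i).Coprime t := fun t ht =>
    ((hp.coprime_iff_not_dvd).2 fun hpt => hpm (hpt.trans ht)).pow_left i
  have himage : {d ∈ (p ^ α * m).divisors | d.factorization p = i}
      = m.divisors.image (p ^ i * ·) := by
    ext d
    simp only [mem_filter, Nat.mem_divisors, mem_image]
    constructor
    · rintro ⟨⟨hd, -⟩, rfl⟩
      have hd0 : d ≠ 0 := ne_zero_of_dvd_ne_zero hN hd
      refine ⟨d / p ^ d.factorization p, ⟨?_, hm⟩,
        Nat.mul_div_cancel' (Nat.ordProj_dvd d p)⟩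
      refine ((Nat.coprime_ordCompl hp hd0).symm.pow_right α).dvd_of_dvd_mul_left ?_
      exact (Nat.div_dvd_of_dvd (Nat.ordProj_dvd d p)).trans hd
    · rintro ⟨t, ⟨ht, -⟩, rfl⟩
      refine ⟨⟨mul_dvd_mul (pow_dvd_pow p hi) ht, hN⟩, ?_⟩
      rw [Nat.factorization_mul (pow_ne_zero _ hp.ne_zero) (ne_zero_of_dvd_ne_zero hm ht),
        Finsupp.add_apply, hp.factorization_pow, Finsupp.single_eq_same,
        Nat.factorization_eq_zero_of_not_dvd fun hpt => hpm (hpt.trans ht), add_zero]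
  rw [himage, sum_image fun a _ b _ hab => Nat.eq_of_mul_eq_mul_left (pow_pos hp.pos _) hab,
    sum_congr rfl fun t ht => Nat.totient_mul (hcop t (Nat.dvd_of_mem_divisors ht)),
    ← mul_sum, Nat.sum_totient]

lemma factorization_addOrderOf_nsmul {G : Type*} [AddMonoid G] {x : G} (hx : IsOfFinAddOrder x)
    {j : ℕ} (hj : j ≠ 0) :
    (addOrderOf (j • x)).factorization = (addOrderOf x).factorization - j.factorization := by
  rw [addOrderOf_nsmul' x hj, Nat.factorization_div_gcd hx.addOrderOf_pos.ne' hj]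

lemma factorization_addOrderOf_le_card {G : Type*} [AddGroup G] [Finite G] (x : G) :
    (addOrderOf x).factorization ≤ (Nat.card G).factorization :=
  (Nat.factorization_le_iff_dvd (addOrderOf_pos x).ne' Nat.card_pos.ne').2
    (addOrderOf_dvd_natCard x)

lemma IsAddCyclic.card_filter_addOrderOf {G : Type*} [AddGroup G] [Fintype G] [IsAddCyclic G]
    (P : ℕ → Prop) [DecidablePred P] :
    #{x : G | P (addOrderOf x)} = ∑ d ∈ (Fintype.card G).divisors with P d, φ d := by
  classical
  rw [card_eq_sum_card_fiberwise (f := addOrderOf) (t := {d ∈ (Fintype.card G).divisors | P d})]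
  · refine sum_congr rfl fun d hd => ?_
    rw [mem_filter, Nat.mem_divisors] at hd
    rw [← IsAddCyclic.card_addOrderOf_eq_totient hd.1.1, filter_filter]
    congr 1
    ext x
    simp only [mem_filter, mem_univ, true_and, and_iff_right_iff_imp]
    exact fun hx => hx ▸ hd.2
  · intro x hx
    simpa [addOrderOf_dvd_card] using hx

section Splitting

variable {G : Type*} [AddCommGroup G] {k : ℕ} {S : Finset G}

lemma IsSplitting.existsUnique_nsmul (h : IsSplitting k (S : Set G)) {g : G} (hg : g ≠ 0) :
    ∃! js : ℕ × G, js ∈ Ioc 0 k ×ˢ S ∧ js.1 • js.2 = g := by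
  obtain ⟨⟨c, s⟩, ⟨⟨hc1, hck⟩, hs, hcs⟩, huniq⟩ := h g hg
  lift c to ℕ using by omega
  refine ⟨(c, s),
    ⟨mem_product.2 ⟨mem_Ioc.2 ⟨by omega, by omega⟩, hs⟩, by simpa using hcs⟩, ?_⟩
  rintro ⟨j, t⟩ ⟨hjt, rfl⟩
  obtain ⟨hj, ht⟩ := mem_product.1 hjt
  have hj := mem_Ioc.1 hj
  have := huniq ((j : ℤ), t) ⟨⟨by omega, by omega⟩, ht, by simp⟩
  simp only [Prod.mk.injEq, Nat.cast_inj] at this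
  rw [this.1, this.2]

lemma IsSplitting.card_filter_eq [Fintype G] [DecidableEq G] (h : IsSplitting k (S : Set G))
    (P : G → Prop) [DecidablePred P] (hP : ¬ P 0) :
    #{js ∈ Ioc 0 k ×ˢ S | P (js.1 • js.2)} = #{x | P x} := by
  refine card_nbij (fun js => js.1 • js.2) (fun js hjs => by simpa using (mem_filter.1 hjs).2)
    (fun a ha b hb hab => ?_) (fun x hx => ?_)
  · have ha := mem_filter.1 ha
    obtain ⟨_, -, huniq⟩ := h.existsUnique_nsmul (g := a.1 • a.2) fun h0 => hP (h0 ▸ ha.2)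
    exact (huniq a ⟨ha.1, rfl⟩).trans (huniq b ⟨(mem_filter.1 hb).1, hab.symm⟩).symm
  · have hx : P x := by simpa using hx
    obtain ⟨js, ⟨hjs, rfl⟩, -⟩ := h.existsUnique_nsmul fun h0 => hP (h0 ▸ hx)
    exact ⟨js, mem_filter.2 ⟨hjs, hx⟩, rfl⟩

end Splitting

lemma card_filter_factorization_addOrderOf_nsmul_eq_sub_one {G : Type*} [AddGroup G] [Finite G]
    [DecidableEq G] {p α : ℕ} (hα : (Nat.card G).factorization p = α) (hα2 : 2 ≤ α)
    (k : ℕ) (S : Finset G) :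
    #{js ∈ Ioc 0 k ×ˢ S | (addOrderOf (js.1 • js.2)).factorization p = α - 1} =
      #{j ∈ Ioc 0 k | j.factorization p = 0} *
          #{s ∈ S | (addOrderOf s).factorization p = α - 1} +
        #{j ∈ Ioc 0 k | j.factorization p = 1} *
          #{s ∈ S | (addOrderOf s).factorization p = α} := by
  have hunion : {js ∈ Ioc 0 k ×ˢ S | (addOrderOf (js.1 • js.2)).factorization p = α - 1} =
      {j ∈ Ioc 0 k | j.factorization p = 0} ×ˢ
          {s ∈ S | (addOrderOf s).factorization p = α - 1} ∪
        {j ∈ Ioc 0 k | j.factorization p = 1} ×ˢ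
          {s ∈ S | (addOrderOf s).factorization p = α} := by
    ext ⟨j, s⟩
    simp only [mem_filter, mem_product, mem_union, mem_Ioc]
    rcases Nat.eq_zero_or_pos j with rfl | hj
    · simp
    rw [factorization_addOrderOf_nsmul (isOfFinAddOrder_of_finite s) hj.ne', Finsupp.tsub_apply]
    have hle : (addOrderOf s).factorization p ≤ α := hα ▸ factorization_addOrderOf_le_card s p
    -- `α - 1 ≠ 0` excludes the truncated case `v_p(ord s) ≤ v_p(j)`.
    have hval : (addOrderOf s).factorization p - j.factorization p = α - 1 ↔
        j.factorization p = 0 ∧ (addOrderOf s).factorization p = α - 1 ∨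
          j.factorization p = 1 ∧ (addOrderOf s).factorization p = α := by
      omega
    rw [hval]
    tauto
  rw [hunion, card_union_of_disjoint, card_product, card_product]
  exact disjoint_left.2 fun js h1 h2 => by
    have := (mem_filter.1 (mem_product.1 h1).1).2
    have := (mem_filter.1 (mem_product.1 h2).1).2
    omega

theorem splitting_count_order_exactly_p_alpha_sub_one_general
    (p α m k N : ℕ) (hp : p.Prime) (hα : 2 ≤ α)
    (hpm : ¬ p ∣ m) (hN : N = p ^ α * m)
    (S : Finset (ZMod N)) (h : IsSplitting k (S : Set (ZMod N))) :
    (k - k / p) *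
        (S.filter (fun s => p ^ (α - 1) ∣ addOrderOf s ∧ ¬ p ^ (α - 1 + 1) ∣ addOrderOf s)).card
      + (k / p - k / p ^ 2) *
          (S.filter (fun s => p ^ α ∣ addOrderOf s ∧ ¬ p ^ (α + 1) ∣ addOrderOf s)).card
      = p ^ (α - 2) * (p - 1) * m := by
  subst hN
  have hm : m ≠ 0 := by rintro rfl; exact hpm (dvd_zero p)
  have : NeZero (p ^ α * m) := ⟨Nat.mul_ne_zero (pow_ne_zero _ hp.ne_zero) hm⟩
  have hv : (Nat.card (ZMod (p ^ α * m))).factorization p = α := by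
    rw [Nat.card_zmod, Nat.factorization_mul (pow_ne_zero _ hp.ne_zero) hm, Finsupp.add_apply,
      hp.factorization_pow, Finsupp.single_eq_same, Nat.factorization_eq_zero_of_not_dvd hpm,
      add_zero]
  have hexact (i : ℕ) (s : ZMod (p ^ α * m)) :=
    hp.pow_dvd_and_not_pow_succ_dvd_iff (i := i) (addOrderOf_pos s).ne'
  simp only [hexact]
  calc (k - k / p) * #{s ∈ S | (addOrderOf s).factorization p = α - 1}
        + (k / p - k / p ^ 2) * #{s ∈ S | (addOrderOf s).factorization p = α}
      = #{js ∈ Ioc 0 k ×ˢ S | (addOrderOf (js.1 • js.2)).factorization p = α - 1} := by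
        rw [card_filter_factorization_addOrderOf_nsmul_eq_sub_one hv hα,
          Nat.card_Ioc_filter_factorization_eq hp, Nat.card_Ioc_filter_factorization_eq hp]
        simp
    _ = #{x : ZMod (p ^ α * m) | (addOrderOf x).factorization p = α - 1} :=
        h.card_filter_eq (fun x => (addOrderOf x).factorization p = α - 1) (by simp; omega)
    _ = φ (p ^ (α - 1)) * m := by
        rw [IsAddCyclic.card_filter_addOrderOf (·.factorization p = α - 1), ZMod.card,
          Nat.sum_totient_filter_factorization_eq hp hpm (by omega)]
    _ = p ^ (α - 2) * (p - 1) * m := by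
        rw [Nat.totient_prime_pow hp (by omega), show α - 1 - 1 = α - 2 by omega]

/-- Counting the elements `x` with `p^{α−1} ∥ ord(x)` in a splitting of `ℤ_{p^α m}`:
`(k − ⌊k/p⌋)·|S_{α−1}| + (⌊k/p⌋ − ⌊k/p²⌋)·|S_α| = p^{α−2}(p−1)m`. -/
theorem splitting_count_order_exactly_p_alpha_sub_one
    (p α m k N : ℕ) (hp : p.Prime) (hα : 2 ≤ α) (hm : 1 ≤ m)
    (hpm : ¬ p ∣ m) (hN : N = p ^ α * m)
    (S : Finset (ZMod N)) (h : IsSplitting k (S : Set (ZMod N))) :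
    (k - k / p) *
        (S.filter (fun s => p ^ (α - 1) ∣ addOrderOf s ∧ ¬ p ^ (α - 1 + 1) ∣ addOrderOf s)).card
      + (k / p - k / p ^ 2) *
          (S.filter (fun s => p ^ α ∣ addOrderOf s ∧ ¬ p ^ (α + 1) ∣ addOrderOf s)).card
      = p ^ (α - 2) * (p - 1) * m :=
  splitting_count_order_exactly_p_alpha_sub_one_general p α m k N hp hα hpm hN S h
end

section
/- Let p be a prime, let u ≥ 0 and α ≥ u + 2 and m ≥ 1 be integers with p ∤ m, and set N = p^α · m. Suppose the set {1, 2, …, k} splits ℤ_N with splitter set S. For an integer i ≥ 0, let S_i = {s ∈ S : p^i divides the additive order of s but p^{i+1} does not}. If |S_{α−1}| = |S_{α−2}| = ⋯ = |S_{α−u}| = 0, then (k − ⌊k/p⌋) · |S_{α−u−1}| + (⌊k/p^{u+1}⌋ − ⌊k/p^{u+2}⌋) · |S_α| = p^{α−u−2} · (p − 1) · m. -/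
/-!
Write `v x` for the exponent of `p` in the additive order of `x`. The splitting makes
`(n, s) ↦ n • s` a bijection from `{1, …, k} × S` onto the nonzero elements of `ZMod N`, so the
`p ^ (α - u - 2) * (p - 1) * m` elements with `v x = α - u - 1` can be counted by pairs. Since
`v (n • s) = v s - min (v s) (v_p n)`, an `s` with `v s < α - u - 1` contributes nothing, one with
`v s = α - u - 1` contributes the `k - k / p` multipliers prime to `p`, and one with `v s = α`
the `k / p ^ (u + 1) - k / p ^ (u + 2)` multipliers with `v_p n = u + 1`; the hypothesis rules
out every other value of `v s`.
-/

open Finset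

namespace Nat

theorem Prime.factorization_eq_iff {p n i : ℕ} (hp : p.Prime) (hn : n ≠ 0) :
    n.factorization p = i ↔ p ^ i ∣ n ∧ ¬p ^ (i + 1) ∣ n := by
  rw [hp.pow_dvd_iff_le_factorization hn, hp.pow_dvd_iff_le_factorization hn]
  omega

theorem Prime.factorization_pow_mul_self {p m : ℕ} (hp : p.Prime) (hpm : ¬p ∣ m) (α : ℕ) :
    (p ^ α * m).factorization p = α := by
  rw [factorization_mul (pow_ne_zero _ hp.ne_zero) (by rintro rfl; simp at hpm),
    Finsupp.add_apply, hp.factorization_pow, Finsupp.single_eq_same,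
    factorization_eq_zero_of_not_dvd hpm, add_zero]

theorem card_Ioc_filter_factorization_eq_s4 {p : ℕ} (hp : p.Prime) (n e : ℕ) :
    #{c ∈ Ioc 0 n | c.factorization p = e} = n / p ^ e - n / p ^ (e + 1) := by
  have hval : {c ∈ Ioc 0 n | c.factorization p = e} =
      {c ∈ Ioc 0 n | p ^ e ∣ c} \ {c ∈ Ioc 0 n | p ^ (e + 1) ∣ c} := by
    rw [← filter_and_not]
    exact filter_congr fun c hc => hp.factorization_eq_iff (mem_Ioc.1 hc).1.ne'
  rw [hval, card_sdiff_of_subset, Ioc_filter_dvd_card_eq_div, Ioc_filter_dvd_card_eq_div]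
  exact monotone_filter_right _ fun _ _ h => (pow_dvd_pow p e.le_succ).trans h

end Nat

section AddMonoid

variable {G : Type*} [AddMonoid G] {x : G}

theorem factorization_addOrderOf_nsmul_le (hx : addOrderOf x ≠ 0) (n p : ℕ) :
    (addOrderOf (n • x)).factorization p ≤ (addOrderOf x).factorization p :=
  (Nat.factorization_le_iff_dvd (ne_zero_of_dvd_ne_zero hx (addOrderOf_smul_dvd n)) hx).2
    (addOrderOf_smul_dvd n) p

theorem factorization_addOrderOf_nsmul_s4 (hx : addOrderOf x ≠ 0) {n : ℕ} (hn : n ≠ 0) (p : ℕ) :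
    (addOrderOf (n • x)).factorization p =
      (addOrderOf x).factorization p -
        min ((addOrderOf x).factorization p) (n.factorization p) := by
  rw [addOrderOf_nsmul' x hn, Nat.factorization_div (Nat.gcd_dvd_left _ _), Finsupp.tsub_apply,
    Nat.factorization_gcd hx hn, Finsupp.inf_apply]

theorem card_Ioc_filter_factorization_addOrderOf_nsmul {p : ℕ} (hp : p.Prime)
    (hx : addOrderOf x ≠ 0) (K : ℕ) {t e : ℕ} (ht : t ≠ 0)
    (hxe : (addOrderOf x).factorization p = t + e) :
    #{n ∈ Ioc 0 K | (addOrderOf (n • x)).factorization p = t} = K / p ^ e - K / p ^ (e + 1) := by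
  rw [← Nat.card_Ioc_filter_factorization_eq_s4 hp]
  refine congrArg card (filter_congr fun n hn => ?_)
  rw [factorization_addOrderOf_nsmul_s4 hx (mem_Ioc.1 hn).1.ne', hxe]
  omega

theorem card_Ioc_filter_factorization_addOrderOf_nsmul_of_lt {p : ℕ} (hx : addOrderOf x ≠ 0)
    (K : ℕ) {t : ℕ} (hxt : (addOrderOf x).factorization p < t) :
    #{n ∈ Ioc 0 K | (addOrderOf (n • x)).factorization p = t} = 0 := by
  refine card_eq_zero.2 (filter_false_of_mem fun n _ => ?_)
  exact (lt_of_le_of_lt (factorization_addOrderOf_nsmul_le hx n p) hxt).ne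

end AddMonoid

namespace ZMod

variable {N : ℕ} [NeZero N]

theorem card_filter_eq_card_Ioc_filter (P : ZMod N → Prop) [DecidablePred P] (hP : ¬P 0) :
    #{x | P x} = #{c ∈ Ioc 0 N | P ((c : ℕ) : ZMod N)} := by
  have hlt : ∀ c ∈ Ioc 0 N, P ((c : ℕ) : ZMod N) → c < N := fun c hc hPc =>
    lt_of_le_of_ne (mem_Ioc.1 hc).2 (by rintro rfl; exact hP (by simpa using hPc))
  refine card_nbij' val (fun c => c) (fun x hx => ?_) (fun c hc => ?_) (fun x _ => ?_)
    (fun c hc => ?_)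
  · simp only [coe_filter, mem_univ, true_and, Set.mem_ofPred_eq, mem_Ioc] at hx ⊢
    refine ⟨⟨Nat.pos_of_ne_zero fun h => hP ?_, (val_lt x).le⟩, by rwa [natCast_zmod_val]⟩
    rwa [(val_eq_zero x).1 h] at hx
  · simp only [coe_filter, mem_univ, true_and, Set.mem_ofPred_eq] at hc ⊢
    exact hc.2
  · exact natCast_zmod_val x
  · simp only [coe_filter, Set.mem_ofPred_eq] at hc
    exact val_cast_of_lt (hlt c hc.1 hc.2)

theorem card_filter_factorization_addOrderOf_eq {p α m : ℕ} (hp : p.Prime) (hpm : ¬p ∣ m)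
    (hN : N = p ^ α * m) {i : ℕ} (hi : i ≠ 0) (hiα : i ≤ α) :
    #{x : ZMod N | (addOrderOf x).factorization p = i} = p ^ (i - 1) * (p - 1) * m := by
  rw [card_filter_eq_card_Ioc_filter _ (by simpa using hi.symm)]
  simp_rw [← Nat.smul_one_eq_cast (R := ZMod N)]
  rw [card_Ioc_filter_factorization_addOrderOf_nsmul hp (x := (1 : ZMod N))
    (by simpa using NeZero.ne N) N hi (e := α - i)
    (by rw [addOrderOf_one, hN, hp.factorization_pow_mul_self hpm]; omega)]
  obtain ⟨j, rfl⟩ := Nat.exists_eq_add_one_of_ne_zero hi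
  obtain ⟨a, rfl⟩ := Nat.exists_eq_add_of_le hiα
  have hpos : ∀ n, 0 < p ^ n := fun n => pow_pos hp.pos n
  rw [Nat.add_sub_cancel_left, Nat.add_sub_cancel,
    Nat.div_eq_of_eq_mul_left (hpos a) (show N = p ^ (j + 1) * m * p ^ a by rw [hN]; ring),
    Nat.div_eq_of_eq_mul_left (hpos (a + 1)) (show N = p ^ j * m * p ^ (a + 1) by rw [hN]; ring),
    Nat.mul_sub_one, Nat.sub_mul, pow_succ]

end ZMod

theorem IsSplitting.card_filter_eq_sum {G : Type*} [AddCommGroup G] [Fintype G] {k : ℕ}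
    {S : Finset G} (h : IsSplitting k (S : Set G)) (P : G → Prop) [DecidablePred P]
    (hP : ¬P 0) :
    #{g | P g} = ∑ s ∈ S, #{n ∈ Ioc 0 k | P (n • s)} := by
  have hpairs :
      ∑ s ∈ S, #{n ∈ Ioc 0 k | P (n • s)} = #{sn ∈ S ×ˢ Ioc 0 k | P (sn.2 • sn.1)} := by
    simp only [card_filter, sum_product]
  have hne : ∀ g, P g → g ≠ 0 := fun g hg h0 => hP (h0 ▸ hg)
  rw [hpairs]
  symm
  refine card_bij (fun sn _ => sn.2 • sn.1) (fun sn hsn => ?_) (fun sn₁ hsn₁ sn₂ hsn₂ heq => ?_)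
    (fun g hg => ?_)
  · simpa using (mem_filter.1 hsn).2
  · simp only [mem_filter, mem_product, mem_Ioc] at hsn₁ hsn₂
    obtain ⟨_, -, huniq⟩ := h _ (hne _ hsn₁.2)
    have e₁ := huniq ((sn₁.2 : ℤ), sn₁.1) ⟨by simp; omega, hsn₁.1.1, natCast_zsmul _ _⟩
    have e₂ := huniq ((sn₂.2 : ℤ), sn₂.1) ⟨by simp; omega, hsn₂.1.1, by simpa using heq.symm⟩
    have e := e₁.trans e₂.symm
    simp only [Prod.mk.injEq, Nat.cast_inj] at e
    exact Prod.ext e.2 e.1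
  · simp only [mem_filter, mem_univ, true_and] at hg
    obtain ⟨⟨c, s⟩, ⟨hc, hs, hcs⟩, -⟩ := h g (hne g hg)
    simp only [Set.mem_Icc] at hc
    have hcs' : c.toNat • s = g := by rw [← natCast_zsmul, Int.toNat_of_nonneg (by omega), hcs]
    refine ⟨(s, c.toNat), ?_, hcs'⟩
    simp only [mem_filter, mem_product, mem_Ioc, hcs']
    exact ⟨⟨hs, by omega, by omega⟩, hg⟩

theorem sum_card_Ioc_filter_factorization_addOrderOf_nsmul {G : Type*} [AddMonoid G] {p : ℕ}
    (hp : p.Prime) {S : Finset G} (hS : ∀ s ∈ S, addOrderOf s ≠ 0) (K : ℕ) {t e j : ℕ}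
    (ht : t ≠ 0) (he : e ≠ 0) (hj : t + e = j)
    (hgap : ∀ s ∈ S, (addOrderOf s).factorization p ≤ t ∨ (addOrderOf s).factorization p = j) :
    ∑ s ∈ S, #{n ∈ Ioc 0 K | (addOrderOf (n • s)).factorization p = t} =
      (K - K / p) * #{s ∈ S | (addOrderOf s).factorization p = t} +
        (K / p ^ e - K / p ^ (e + 1)) * #{s ∈ S | (addOrderOf s).factorization p = j} := by
  have hterm : ∀ s ∈ S, #{n ∈ Ioc 0 K | (addOrderOf (n • s)).factorization p = t} =
      (if (addOrderOf s).factorization p = t then K - K / p else 0) +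
        (if (addOrderOf s).factorization p = j then K / p ^ e - K / p ^ (e + 1) else 0) := by
    intro s hs
    rcases hgap s hs with hle | hvj
    · rcases hle.lt_or_eq with hlt | hvt
      · rw [card_Ioc_filter_factorization_addOrderOf_nsmul_of_lt (hS s hs) K hlt,
          if_neg hlt.ne, if_neg (by omega)]
      · rw [card_Ioc_filter_factorization_addOrderOf_nsmul hp (hS s hs) K ht (e := 0) hvt,
          if_pos hvt, if_neg (by omega), pow_zero, Nat.div_one, zero_add, pow_one, add_zero]
    · rw [card_Ioc_filter_factorization_addOrderOf_nsmul hp (hS s hs) K ht (e := e)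
          (hvj.trans hj.symm), if_neg (by omega), if_pos hvj, zero_add]
  rw [sum_congr rfl hterm, sum_add_distrib, ← sum_filter, ← sum_filter, sum_const, sum_const,
    smul_eq_mul, smul_eq_mul, mul_comm, mul_comm #_]

theorem splitting_count_order_inductive_step_general
    (p u α m k N : ℕ) (hp : p.Prime) (hα : u + 2 ≤ α)
    (hpm : ¬ p ∣ m) (hN : N = p ^ α * m)
    (S : Finset (ZMod N)) (h : IsSplitting k (S : Set (ZMod N)))
    (h0 : ∀ i, 1 ≤ i → i ≤ u →
      (S.filter
        (fun s => p ^ (α - i) ∣ addOrderOf s ∧ ¬ p ^ (α - i + 1) ∣ addOrderOf s)).card = 0) :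
    (k - k / p) *
        (S.filter
          (fun s => p ^ (α - u - 1) ∣ addOrderOf s ∧ ¬ p ^ (α - u - 1 + 1) ∣ addOrderOf s)).card
      + (k / p ^ (u + 1) - k / p ^ (u + 2)) *
          (S.filter (fun s => p ^ α ∣ addOrderOf s ∧ ¬ p ^ (α + 1) ∣ addOrderOf s)).card
      = p ^ (α - u - 2) * (p - 1) * m := by
  have hN0 : N ≠ 0 := hN ▸ mul_ne_zero (pow_ne_zero _ hp.ne_zero) (by rintro rfl; simp at hpm)
  have : NeZero N := ⟨hN0⟩
  have hord (x : ZMod N) : addOrderOf x ≠ 0 := (addOrderOf_pos x).ne'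
  have hexact (i : ℕ) : {s ∈ S | p ^ i ∣ addOrderOf s ∧ ¬p ^ (i + 1) ∣ addOrderOf s} =
      {s ∈ S | (addOrderOf s).factorization p = i} :=
    filter_congr fun s _ => (hp.factorization_eq_iff (hord s)).symm
  have hle (x : ZMod N) : (addOrderOf x).factorization p ≤ α := by
    have hdvd : addOrderOf x ∣ N := by simpa using addOrderOf_dvd_card (x := x)
    simpa [hN, hp.factorization_pow_mul_self hpm] using
      (Nat.factorization_le_iff_dvd (hord x) hN0).2 hdvd p
  have hgap (s : ZMod N) (hs : s ∈ S) :
      (addOrderOf s).factorization p ≤ α - u - 1 ∨ (addOrderOf s).factorization p = α := by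
    by_contra! hmid
    have hv := hle s
    have hempty := h0 (α - (addOrderOf s).factorization p) (by omega) (by omega)
    rw [hexact, Nat.sub_sub_self hv, card_eq_zero, filter_eq_empty_iff] at hempty
    exact hempty hs rfl
  rw [hexact, hexact, show α - u - 2 = α - u - 1 - 1 by omega,
    ← ZMod.card_filter_factorization_addOrderOf_eq hp hpm hN (i := α - u - 1) (by omega)
      (by omega),
    h.card_filter_eq_sum _ (by simp; omega)]
  exact (sum_card_Ioc_filter_factorization_addOrderOf_nsmul hp (fun s _ => hord s) k
    (e := u + 1) (by omega) (by omega) (by omega) hgap).symm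

/-- Counting the elements `x` with `p^{α−u−1} ∥ ord(x)` in a splitting of `ℤ_{p^α m}`,
assuming `|S_{α−1}| = ⋯ = |S_{α−u}| = 0`:
`(k − ⌊k/p⌋)·|S_{α−u−1}| + (⌊k/p^{u+1}⌋ − ⌊k/p^{u+2}⌋)·|S_α| = p^{α−u−2}(p−1)m`. -/
theorem splitting_count_order_inductive_step
    (p u α m k N : ℕ) (hp : p.Prime) (hα : u + 2 ≤ α) (hm : 1 ≤ m)
    (hpm : ¬ p ∣ m) (hN : N = p ^ α * m)
    (S : Finset (ZMod N)) (h : IsSplitting k (S : Set (ZMod N)))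
    (h0 : ∀ i, 1 ≤ i → i ≤ u →
      (S.filter
        (fun s => p ^ (α - i) ∣ addOrderOf s ∧ ¬ p ^ (α - i + 1) ∣ addOrderOf s)).card = 0) :
    (k - k / p) *
        (S.filter
          (fun s => p ^ (α - u - 1) ∣ addOrderOf s ∧ ¬ p ^ (α - u - 1 + 1) ∣ addOrderOf s)).card
      + (k / p ^ (u + 1) - k / p ^ (u + 2)) *
          (S.filter (fun s => p ^ α ∣ addOrderOf s ∧ ¬ p ^ (α + 1) ∣ addOrderOf s)).card
      = p ^ (α - u - 2) * (p - 1) * m :=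
  splitting_count_order_inductive_step_general p u α m k N hp hα hpm hN S h h0
end

section
/- Let p be a prime, α ≥ 1 and m ≥ 1 integers with p ∤ m, and set N = p^α · m. Suppose the set {1, 2, …, k} splits ℤ_N with splitter set S. Let β ≥ 0 be an integer with β ≤ α − 1 such that p^β divides k − ⌊k/p⌋ but p^{β+1} does not. For an integer i ≥ 0, let S_i = {s ∈ S : p^i divides the additive order of s but p^{i+1} does not}. Then |S_{α−i}| = 0 for all integers i with 1 ≤ i ≤ β. -/
open Finset

lemma zmod_card_ker (n d : ℕ) [NeZero n] (hd : d ∣ n) :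
    (Finset.univ.filter (fun x : ZMod n => d • x = 0)).card = d := by
  classical
  have hn : n ≠ 0 := NeZero.ne n
  have hd0 : 0 < d := Nat.pos_of_dvd_of_pos hd (Nat.pos_of_ne_zero hn)
  set g : ZMod n := ((n / d : ℕ) : ZMod n) with hg
  have hdg : d • g = 0 := by
    rw [hg, nsmul_eq_mul]
    have : ((d : ZMod n) * ((n / d : ℕ) : ZMod n)) = ((d * (n / d) : ℕ) : ZMod n) := by
      push_cast; ring
    rw [this, Nat.mul_div_cancel' hd, ZMod.natCast_self]
  have hsub : ((AddSubgroup.zmultiples g : AddSubgroup (ZMod n)) : Set (ZMod n)).toFinset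
      ⊆ Finset.univ.filter (fun x : ZMod n => d • x = 0) := by
    intro x hx
    rw [Set.mem_toFinset] at hx
    obtain ⟨c, rfl⟩ := AddSubgroup.mem_zmultiples_iff.mp hx
    rw [Finset.mem_filter]
    refine ⟨Finset.mem_univ _, ?_⟩
    rw [smul_comm, hdg, smul_zero]
  have hcard1 : ((AddSubgroup.zmultiples g : AddSubgroup (ZMod n)) : Set (ZMod n)).toFinset.card = d := by
    rw [Set.toFinset_card]
    have : Fintype.card ((AddSubgroup.zmultiples g : AddSubgroup (ZMod n)) : Set (ZMod n))
        = Nat.card (AddSubgroup.zmultiples g) := by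
      rw [Nat.card_eq_fintype_card]; rfl
    rw [this, Nat.card_zmultiples, hg, ZMod.addOrderOf_coe _ hn,
      Nat.gcd_eq_right (Nat.div_dvd_of_dvd hd), Nat.div_div_self hd hn]
  have hle : (Finset.univ.filter (fun x : ZMod n => d • x = 0)).card ≤ d := by
    have := IsAddCyclic.card_nsmul_eq_zero_le (α := ZMod n) hd0
    convert this using 2
  refine le_antisymm hle ?_
  calc d = _ := hcard1.symm
    _ ≤ _ := Finset.card_le_card hsub

lemma c0_step (p n : ℕ) (hp : 2 ≤ p) (h : (p : ℤ) ∣ (n : ℤ) - ((n / p : ℕ) : ℤ)) :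
    (n : ℤ) - ((n / p : ℕ) : ℤ) = p * (((n / p : ℕ) : ℤ) - ((n / p / p : ℕ) : ℤ)) := by
  set q := n / p with hq'
  set r := n % p with hr'
  set q' := q / p with hq''
  set r' := q % p with hr''
  have h1 : n = p * q + r := (Nat.div_add_mod n p).symm ▸ rfl
  have h2 : q = p * q' + r' := (Nat.div_add_mod q p).symm ▸ rfl
  have h3 : r < p := Nat.mod_lt _ (by omega)
  have h4 : r' < p := Nat.mod_lt _ (by omega)
  have hn : (n : ℤ) = p * q + r := by exact_mod_cast congrArg (Nat.cast : ℕ → ℤ) h1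
  have hqz : (q : ℤ) = p * q' + r' := by exact_mod_cast congrArg (Nat.cast : ℕ → ℤ) h2
  have key : (n : ℤ) - q = p * ((q : ℤ) - q') + ((r : ℤ) - r') := by
    rw [hn, hqz]; ring
  have hdr : (p : ℤ) ∣ ((r : ℤ) - r') := by
    have h' := h
    rw [key] at h'
    exact (dvd_add_right ⟨(q : ℤ) - q', rfl⟩).mp h'
  have hrr : (r : ℤ) = r' := by
    have : (r : ℤ) - r' = 0 := by
      refine Int.eq_zero_of_abs_lt_dvd hdr ?_
      rw [abs_sub_lt_iff]
      constructor <;> omega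
    linarith
  rw [hn, hqz, hrr]; ring

/-- If `p^β ∥ (k − ⌊k/p⌋)` with `β ≤ α − 1`, then in any splitting of `ℤ_{p^α m}` by
`{1, …, k}` one has `|S_{α−1}| = ⋯ = |S_{α−β}| = 0`. -/
theorem splitting_vanishing_intermediate_orders
    (p α m k N β : ℕ) (hp : p.Prime) (hα : 1 ≤ α) (hm : 1 ≤ m)
    (hpm : ¬ p ∣ m) (hN : N = p ^ α * m) (hβ : β ≤ α - 1)
    (hd1 : p ^ β ∣ (k - k / p)) (hd2 : ¬ p ^ (β + 1) ∣ (k - k / p))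
    (S : Finset (ZMod N)) (h : IsSplitting k (S : Set (ZMod N))) :
    ∀ i, 1 ≤ i → i ≤ β →
      (S.filter
        (fun s => p ^ (α - i) ∣ addOrderOf s ∧ ¬ p ^ (α - i + 1) ∣ addOrderOf s)).card = 0 := by
  classical
  subst hN
  have hp2 : 2 ≤ p := hp.two_le
  have hN0 : p ^ α * m ≠ 0 := by positivity
  haveI : NeZero (p ^ α * m) := ⟨hN0⟩
  have hk0 : k - k / p ≠ 0 := fun hc => hd2 (hc ▸ dvd_zero _)
  have hkp : k / p < k := by
    rcases Nat.eq_zero_or_pos k with hk | hk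
    · omega
    · exact Nat.div_lt_self hk (by omega)
  -- p-adic valuation of the additive order
  set v : ZMod (p ^ α * m) → ℕ := fun s => (addOrderOf s).factorization p with hv
  have hord0 : ∀ s : ZMod (p ^ α * m), addOrderOf s ≠ 0 := by
    intro s
    exact (addOrderOf_pos s).ne'
  have hordN : ∀ s : ZMod (p ^ α * m), addOrderOf s ∣ p ^ α * m := by
    intro s
    have := addOrderOf_dvd_card (x := s)
    rwa [ZMod.card] at this
  have hNfact : (p ^ α * m).factorization p = α := by
    rw [Nat.factorization_mul (by positivity) (by omega), hp.factorization_pow]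
    simp [Nat.factorization_eq_zero_of_not_dvd hpm]
  have hvle : ∀ s : ZMod (p ^ α * m), v s ≤ α := by
    intro s
    have h1 : (addOrderOf s).factorization ≤ (p ^ α * m).factorization :=
      (Nat.factorization_le_iff_dvd (hord0 s) hN0).mpr (hordN s)
    have := h1 p
    rwa [hNfact] at this
  have hiff : ∀ (s : ZMod (p ^ α * m)) (i : ℕ),
      (p ^ i ∣ addOrderOf s ∧ ¬ p ^ (i+1) ∣ addOrderOf s) ↔ v s = i := by
    intro s i
    rw [Nat.Prime.pow_dvd_iff_le_factorization hp (hord0 s),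
      Nat.Prime.pow_dvd_iff_le_factorization hp (hord0 s)]
    simp only [hv]
    omega
  set n' : ℕ → ℕ := fun i => (S.filter (fun s => v s = i)).card with hn'
  set Y : ℕ → Finset (ZMod (p ^ α * m)) :=
    fun j => Finset.univ.filter (fun x => (p ^ j * m) • x = 0) with hY
  set Z : ℕ :=
    ((Finset.Ioc 0 k ×ˢ S).filter (fun ws => ((ws.1 : ℤ) • ws.2 : ZMod (p ^ α * m)) = 0)).card
    with hZ
  have hYcard : ∀ j, j ≤ α → (Y j).card = p ^ j * m :=
    fun j hj => zmod_card_ker _ _ (mul_dvd_mul (pow_dvd_pow p hj) dvd_rfl)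
  have hY0 : ∀ j, (0 : ZMod (p ^ α * m)) ∈ Y j := by
    intro j
    simp [hY]
  -- counting the multipliers for a fixed s
  have hdvd_iff : ∀ j ≤ α, ∀ s : ZMod (p ^ α * m), ∀ w : ℕ, 0 < w →
      (addOrderOf s ∣ (p ^ j * m) * w ↔ p ^ (v s - j) ∣ w) := by
    intro j hj s w hw
    have ht0 : addOrderOf s ≠ 0 := hord0 s
    have hpi : p ^ (v s) ∣ addOrderOf s := Nat.ordProj_dvd _ p
    have htt : p ^ (v s) * (addOrderOf s / p ^ (v s)) = addOrderOf s :=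
      Nat.ordProj_mul_ordCompl_eq_self _ p
    have hpt' : ¬ p ∣ (addOrderOf s / p ^ (v s)) := Nat.not_dvd_ordCompl hp ht0
    have hcop : Nat.Coprime p (addOrderOf s / p ^ (v s)) :=
      (Nat.Prime.coprime_iff_not_dvd hp).mpr hpt'
    have ht'm : (addOrderOf s / p ^ (v s)) ∣ m := by
      have h1 : (addOrderOf s / p ^ (v s)) ∣ m * p ^ α := by
        refine dvd_trans ?_ (dvd_trans (hordN s) (dvd_of_eq (mul_comm _ _)))
        exact Dvd.intro_left _ htt
      exact (Nat.Coprime.pow_right α hcop.symm).dvd_of_dvd_mul_right h1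
    constructor
    · intro hdv
      have hne : (p ^ j * m) * w ≠ 0 := by positivity
      have h1 : p ^ (v s) ∣ (p ^ j * m) * w := hpi.trans hdv
      have h2 : v s ≤ ((p ^ j * m) * w).factorization p :=
        (Nat.Prime.pow_dvd_iff_le_factorization hp hne).mp h1
      have h3 : ((p ^ j * m) * w).factorization p = j + w.factorization p := by
        rw [Nat.factorization_mul (by positivity) (by omega),
          Nat.factorization_mul (by positivity) (by omega), hp.factorization_pow]
        simp [Nat.factorization_eq_zero_of_not_dvd hpm]
      have h4 : v s - j ≤ w.factorization p := by omega
      exact (Nat.Prime.pow_dvd_iff_le_factorization hp (by omega)).mpr h4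
    · rintro ⟨u, rfl⟩
      rw [← htt]
      have h1 : p ^ (v s) ∣ p ^ j * (p ^ (v s - j) * u) := by
        have h2 : p ^ (v s) ∣ p ^ (j + (v s - j)) := pow_dvd_pow p (by omega)
        refine h2.trans ?_
        rw [pow_add]
        exact mul_dvd_mul_left _ (dvd_mul_right _ u)
      have h2 := mul_dvd_mul h1 ht'm
      refine h2.trans (dvd_of_eq ?_)
      ring
  have hcnt : ∀ j ≤ α, ∀ s ∈ S,
      ((Finset.Ioc 0 k).filter (fun w : ℕ => ((w : ℤ) • s : ZMod (p ^ α * m)) ∈ Y j)).card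
        = k / p ^ (v s - j) := by
    intro j hj s hs
    have hcong : ∀ w ∈ Finset.Ioc 0 k,
        (((w : ℤ) • s : ZMod (p ^ α * m)) ∈ Y j ↔ p ^ (v s - j) ∣ w) := by
      intro w hw
      rw [Finset.mem_Ioc] at hw
      rw [natCast_zsmul]
      simp only [hY, Finset.mem_filter, Finset.mem_univ, true_and]
      rw [← hdvd_iff j hj s w hw.1, ← mul_nsmul']
      exact addOrderOf_dvd_iff_nsmul_eq_zero.symm
    rw [Finset.filter_congr hcong, Nat.Ioc_filter_dvd_card_eq_div]
  -- the bijection given by the splitting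
  have hbij : ∀ T : Finset (ZMod (p ^ α * m)), (0 : ZMod (p ^ α * m)) ∉ T →
      ((Finset.Ioc 0 k ×ˢ S).filter (fun ws => ((ws.1 : ℤ) • ws.2 : ZMod (p ^ α * m)) ∈ T)).card
        = T.card := by
    intro T hT
    refine Finset.card_bij (fun ws _ => ((ws.1 : ℤ) • ws.2 : ZMod (p ^ α * m))) ?_ ?_ ?_
    · intro ws hws
      exact (Finset.mem_filter.mp hws).2
    · intro ws1 h1 ws2 h2 heq
      obtain ⟨hmem1, hT1⟩ := Finset.mem_filter.mp h1
      obtain ⟨hmem2, hT2⟩ := Finset.mem_filter.mp h2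
      obtain ⟨hw1, hs1⟩ := Finset.mem_product.mp hmem1
      obtain ⟨hw2, hs2⟩ := Finset.mem_product.mp hmem2
      rw [Finset.mem_Ioc] at hw1 hw2
      have hg0 : ((ws1.1 : ℤ) • ws1.2 : ZMod (p ^ α * m)) ≠ 0 := fun hc => hT (hc ▸ hT1)
      obtain ⟨q, hq, huniq⟩ := h _ hg0
      have m1 : ((ws1.1 : ℤ)) ∈ Set.Icc (1 : ℤ) (k : ℤ) :=
        Set.mem_Icc.mpr ⟨by exact_mod_cast hw1.1, by exact_mod_cast hw1.2⟩
      have m2 : ((ws2.1 : ℤ)) ∈ Set.Icc (1 : ℤ) (k : ℤ) :=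
        Set.mem_Icc.mpr ⟨by exact_mod_cast hw2.1, by exact_mod_cast hw2.2⟩
      have e1 := huniq ((ws1.1 : ℤ), ws1.2) ⟨m1, Finset.mem_coe.mpr hs1, rfl⟩
      have e2 := huniq ((ws2.1 : ℤ), ws2.2) ⟨m2, Finset.mem_coe.mpr hs2, heq.symm⟩
      have e3 : ((ws1.1 : ℤ), ws1.2) = ((ws2.1 : ℤ), ws2.2) := e1.trans e2.symm
      simp only [Prod.mk.injEq] at e3
      exact Prod.ext (by exact_mod_cast e3.1) e3.2
    · intro g hg
      have hg0 : g ≠ 0 := fun hc => hT (hc ▸ hg)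
      obtain ⟨⟨w, s⟩, ⟨hw, hs, hws⟩, -⟩ := h g hg0
      rw [Set.mem_Icc] at hw
      have hwt : (w.toNat : ℤ) = w := Int.toNat_of_nonneg (by omega)
      refine ⟨(w.toNat, s), ?_, ?_⟩
      · rw [Finset.mem_filter, Finset.mem_product, Finset.mem_Ioc]
        refine ⟨⟨⟨by omega, by omega⟩, Finset.mem_coe.mp hs⟩, ?_⟩
        simp only
        rw [hwt, hws]
        exact hg
      · simp only
        rw [hwt, hws]
  -- the master counting identity
  have master : ∀ j, j ≤ α →
      (∑ i ∈ Finset.range (α + 1), (n' i : ℤ) * ((k / p ^ (i - j) : ℕ) : ℤ))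
        = Z + (p : ℤ) ^ j * m - 1 := by
    intro j hj
    have hQsplit :
        ((Finset.Ioc 0 k ×ˢ S).filter
          (fun ws => ((ws.1 : ℤ) • ws.2 : ZMod (p ^ α * m)) ∈ Y j)).card
          = (p ^ j * m - 1) + Z := by
      have hpred : ∀ ws ∈ Finset.Ioc 0 k ×ˢ S,
          (((ws.1 : ℤ) • ws.2 : ZMod (p ^ α * m)) ∈ Y j ↔
            (((ws.1 : ℤ) • ws.2 : ZMod (p ^ α * m)) ∈ (Y j).erase 0 ∨
              ((ws.1 : ℤ) • ws.2 : ZMod (p ^ α * m)) = 0)) := by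
        intro ws _
        rw [Finset.mem_erase]
        constructor
        · intro hx
          by_cases h0 : ((ws.1 : ℤ) • ws.2 : ZMod (p ^ α * m)) = 0
          · exact Or.inr h0
          · exact Or.inl ⟨h0, hx⟩
        · rintro (⟨-, hx⟩ | h0)
          · exact hx
          · rw [h0]; exact hY0 j
      have hdisj : Disjoint
          ((Finset.Ioc 0 k ×ˢ S).filter
            (fun ws => ((ws.1 : ℤ) • ws.2 : ZMod (p ^ α * m)) ∈ (Y j).erase 0))
          ((Finset.Ioc 0 k ×ˢ S).filter
            (fun ws => ((ws.1 : ℤ) • ws.2 : ZMod (p ^ α * m)) = 0)) := by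
        rw [Finset.disjoint_filter]
        intro x _ hx1 hx2
        exact absurd (hx2 ▸ hx1) (Finset.notMem_erase 0 _)
      rw [Finset.filter_congr hpred, Finset.filter_or,
        Finset.card_union_of_disjoint hdisj,
        hbij _ (Finset.notMem_erase 0 _), Finset.card_erase_of_mem (hY0 j), hYcard j hj]
    have hfib :
        ((Finset.Ioc 0 k ×ˢ S).filter
          (fun ws => ((ws.1 : ℤ) • ws.2 : ZMod (p ^ α * m)) ∈ Y j)).card
          = ∑ s ∈ S,
            ((Finset.Ioc 0 k).filter
              (fun w : ℕ => ((w : ℤ) • s : ZMod (p ^ α * m)) ∈ Y j)).card := by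
      rw [Finset.card_eq_sum_card_fiberwise
        (f := Prod.snd) (t := S)
        (fun ws hws => (Finset.mem_product.mp (Finset.mem_filter.mp hws).1).2)]
      refine Finset.sum_congr rfl fun s hs => ?_
      refine (Finset.card_bij (fun w _ => ((w, s) : ℕ × ZMod (p ^ α * m))) ?_ ?_ ?_).symm
      · intro w hw
        rw [Finset.mem_filter] at hw ⊢
        exact ⟨Finset.mem_filter.mpr
          ⟨Finset.mem_product.mpr ⟨hw.1, hs⟩, hw.2⟩, rfl⟩
      · intro w1 h1 w2 h2 heq
        exact (Prod.ext_iff.mp heq).1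
      · intro ws hws
        obtain ⟨hws1, hws2⟩ := Finset.mem_filter.mp hws
        obtain ⟨hprod, hpredw⟩ := Finset.mem_filter.mp hws1
        refine ⟨ws.1, ?_, ?_⟩
        · rw [Finset.mem_filter]
          refine ⟨(Finset.mem_product.mp hprod).1, ?_⟩
          rw [hws2] at hpredw
          exact hpredw
        · exact Prod.ext rfl hws2.symm
    have hsum2 :
        (∑ s ∈ S,
          ((Finset.Ioc 0 k).filter
            (fun w : ℕ => ((w : ℤ) • s : ZMod (p ^ α * m)) ∈ Y j)).card)
          = ∑ i ∈ Finset.range (α + 1), n' i * (k / p ^ (i - j)) := by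
      have h1 : (∑ s ∈ S,
          ((Finset.Ioc 0 k).filter
            (fun w : ℕ => ((w : ℤ) • s : ZMod (p ^ α * m)) ∈ Y j)).card)
          = ∑ s ∈ S, k / p ^ (v s - j) :=
        Finset.sum_congr rfl fun s hs => hcnt j hj s hs
      rw [h1, ← Finset.sum_fiberwise_of_maps_to' (g := v) (t := Finset.range (α + 1))
        (fun s _ => Finset.mem_range.mpr (Nat.lt_succ_of_le (hvle s)))
        (fun i => k / p ^ (i - j))]
      refine Finset.sum_congr rfl fun i _ => ?_
      rw [Finset.sum_const, smul_eq_mul]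
    have hNat : (∑ i ∈ Finset.range (α + 1), n' i * (k / p ^ (i - j)))
        = (p ^ j * m - 1) + Z := by
      rw [← hsum2, ← hfib, hQsplit]
    have hge : 1 ≤ p ^ j * m := by
      have : 0 < p ^ j * m := by positivity
      omega
    have hcast := congrArg (Nat.cast : ℕ → ℤ) hNat
    push_cast [Nat.cast_sub hge] at hcast ⊢
    linarith [hcast]
  -- difference equations
  set A : ℕ → ℤ := fun e => ((k / p ^ e : ℕ) : ℤ) with hA
  have hE : ∀ j, 1 ≤ j → j ≤ α →
      (∑ t ∈ Finset.range (α + 1), (n' t : ℤ) * (A (t - j) - A (t - (j-1))))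
        = (p : ℤ) ^ j * m - (p : ℤ) ^ (j-1) * m := by
    intro j hj1 hjα
    have h1 := master j hjα
    have h2 := master (j-1) (by omega)
    have h3 : (∑ t ∈ Finset.range (α + 1), (n' t : ℤ) * (A (t - j) - A (t - (j-1))))
        = (∑ t ∈ Finset.range (α + 1), (n' t : ℤ) * A (t - j))
          - (∑ t ∈ Finset.range (α + 1), (n' t : ℤ) * A (t - (j-1))) := by
      rw [← Finset.sum_sub_distrib]
      exact Finset.sum_congr rfl fun t _ => by ring
    rw [h3, h1, h2]
    ring
  set C : ℕ → ℤ := fun e => A e - A (e + 1) with hC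
  have hC0 : C 0 = ((k - k / p : ℕ) : ℤ) := by
    simp only [hC, hA, pow_zero, Nat.div_one, zero_add, pow_one]
    rw [Nat.cast_sub (Nat.div_le_self k p)]
  have hC0ne : C 0 ≠ 0 := by
    rw [hC0]
    exact_mod_cast hk0
  have hCstep : ∀ e, e ≤ β → C 0 = (p : ℤ) ^ e * C e := by
    intro e he
    induction e with
    | zero => simp
    | succ n IH =>
      have h1 : C 0 = (p : ℤ) ^ n * C n := IH (by omega)
      have hd1' : (p : ℤ) ^ (n + 1) ∣ C 0 := by
        have hb : (p : ℤ) ^ β ∣ C 0 := by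
          rw [hC0]
          exact_mod_cast hd1
        exact dvd_trans (pow_dvd_pow _ he) hb
      have h2 : (p : ℤ) ∣ C n := by
        rw [h1, pow_succ] at hd1'
        exact (mul_dvd_mul_iff_left (a := (p : ℤ) ^ n) (by positivity)).mp hd1'
      have hdiv1 : k / p ^ n / p = k / p ^ (n + 1) := by
        rw [Nat.div_div_eq_div_mul, ← pow_succ]
      have hdiv2 : k / p ^ n / p / p = k / p ^ (n + 2) := by
        rw [hdiv1, Nat.div_div_eq_div_mul, ← pow_succ]
      have h2' : (p : ℤ) ∣ ((k / p ^ n : ℕ) : ℤ) - ((k / p ^ n / p : ℕ) : ℤ) := by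
        rw [hdiv1]
        simpa only [hC, hA] using h2
      have hkey := c0_step p (k / p ^ n) hp2 h2'
      have h3 : C n = p * C (n + 1) := by
        simp only [hC, hA]
        rw [← hdiv1, ← hdiv2]
        exact hkey
      rw [h1, h3, pow_succ]
      ring
  -- the top equation
  have hEα : (n' α : ℤ) * C 0 = (p : ℤ) ^ α * m - (p : ℤ) ^ (α - 1) * m := by
    have hEa := hE α hα le_rfl
    have hsingle : (∑ t ∈ Finset.range (α + 1),
          (n' t : ℤ) * (A (t - α) - A (t - (α - 1))))
        = (n' α : ℤ) * (A (α - α) - A (α - (α - 1))) := by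
      apply Finset.sum_eq_single
      · intro t ht htne
        rw [Finset.mem_range] at ht
        have h1 : t - α = 0 := by omega
        have h2 : t - (α - 1) = 0 := by omega
        rw [h1, h2, sub_self, mul_zero]
      · intro habs
        exact absurd (Finset.self_mem_range_succ α) habs
    rw [hsingle] at hEa
    have h1 : α - (α - 1) = 1 := by omega
    rw [Nat.sub_self, h1] at hEa
    simp only [hC, hA]
    simpa only [hA] using hEa
  -- main induction
  have main : ∀ i, 1 ≤ i → i ≤ β → n' (α - i) = 0 := by
    intro i
    induction i using Nat.strong_induction_on with
    | _ i IH =>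
      intro hi1 hiβ
      have hj1 : 1 ≤ α - i := by omega
      have hjα : α - i ≤ α := by omega
      have hEj := hE (α - i) hj1 hjα
      have hsum : (∑ t ∈ Finset.range (α + 1),
            (n' t : ℤ) * (A (t - (α - i)) - A (t - (α - i - 1))))
          = (n' (α - i) : ℤ) * C 0 + (n' α : ℤ) * C i := by
        have hsub : ({α - i, α} : Finset ℕ) ⊆ Finset.range (α + 1) := by
          intro x hx
          rw [Finset.mem_insert, Finset.mem_singleton] at hx
          rw [Finset.mem_range]
          omega
        rw [← Finset.sum_subset hsub ?_]
        · rw [Finset.sum_pair (by omega : α - i ≠ α)]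
          have h0 : α - i - (α - i) = 0 := Nat.sub_self _
          have h1 : α - i - (α - i - 1) = 1 := by omega
          have h2 : α - (α - i) = i := by omega
          have h3 : α - (α - i - 1) = i + 1 := by omega
          rw [h0, h1, h2, h3]
        · intro t htr htn
          rw [Finset.mem_range] at htr
          rw [Finset.mem_insert, Finset.mem_singleton] at htn
          push_neg at htn
          by_cases hlt : t < α - i
          · have h1 : t - (α - i) = 0 := by omega
            have h2 : t - (α - i - 1) = 0 := by omega
            rw [h1, h2, sub_self, mul_zero]
          · have hs1 : 1 ≤ α - t := by omega
            have hs2 : α - t < i := by omega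
            have hsβ : α - t ≤ β := by omega
            have hz := IH (α - t) hs2 hs1 hsβ
            have ht' : α - (α - t) = t := by omega
            rw [ht'] at hz
            rw [hz]
            norm_num
      rw [hsum] at hEj
      have hCi := hCstep i hiβ
      have hcancel : (n' α : ℤ) * C i
          = (p : ℤ) ^ (α - i) * m - (p : ℤ) ^ (α - i - 1) * m := by
        have h1 : (p : ℤ) ^ i * ((n' α : ℤ) * C i)
            = (p : ℤ) ^ i * ((p : ℤ) ^ (α - i) * m - (p : ℤ) ^ (α - i - 1) * m) := by
          calc (p : ℤ) ^ i * ((n' α : ℤ) * C i)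
              = (n' α : ℤ) * ((p : ℤ) ^ i * C i) := by ring
            _ = (n' α : ℤ) * C 0 := by rw [← hCi]
            _ = (p : ℤ) ^ α * m - (p : ℤ) ^ (α - 1) * m := hEα
            _ = (p : ℤ) ^ i * ((p : ℤ) ^ (α - i) * m - (p : ℤ) ^ (α - i - 1) * m) := by
                rw [mul_sub]
                congr 1
                · rw [← mul_assoc, ← pow_add]
                  congr 2
                  omega
                · rw [← mul_assoc, ← pow_add]
                  congr 2
                  omega
        exact mul_left_cancel₀ (by positivity) h1
      have hzero : (n' (α - i) : ℤ) * C 0 = 0 := by linarith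
      rcases mul_eq_zero.mp hzero with hcase | hcase
      · exact_mod_cast hcase
      · exact absurd hcase hC0ne
  intro i hi1 hiβ
  rw [Finset.card_eq_zero, Finset.filter_eq_empty_iff]
  intro s hs hcon
  have hvs : v s = α - i := (hiff s (α - i)).mp hcon
  have h0 := main i hi1 hiβ
  rw [hn', Finset.card_eq_zero, Finset.filter_eq_empty_iff] at h0
  exact h0 hs hvs
end

section
/- Let p be a prime, α ≥ 1 and m ≥ 1 integers with p ∤ m, and set N = p^α · m. If the set {1, 2, …, k} splits ℤ_N, then p^α does not divide k − ⌊k/p⌋. -/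
/-- If `{1, …, k}` splits `ℤ_{p^α m}` (with `p ∤ m`), then `p^α ∤ (k − ⌊k/p⌋)`. -/
theorem splitting_p_pow_alpha_not_dvd
    (p α m k N : ℕ) (hp : p.Prime) (hα : 1 ≤ α) (hm : 1 ≤ m)
    (hpm : ¬ p ∣ m) (hN : N = p ^ α * m)
    (S : Set (ZMod N)) (h : IsSplitting k S) :
    ¬ p ^ α ∣ (k - k / p) := by
  haveI : Fact p.Prime := ⟨hp⟩
  obtain ⟨β, rfl⟩ : ∃ β, α = β + 1 := ⟨α - 1, by omega⟩
  have hp0 : 0 < p := hp.pos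
  have hN0 : 0 < N := by
    rw [hN]; positivity
  haveI : NeZero N := ⟨hN0.ne'⟩
  have hdvd : p ∣ N := by
    rw [hN, pow_succ]
    exact Dvd.dvd.mul_right (Dvd.dvd.mul_left dvd_rfl _) m
  set f : ZMod N →+* ZMod p := ZMod.castHom hdvd (ZMod p) with hf
  -- f is surjective
  haveI : NeZero p := ⟨hp.pos.ne'⟩
  have hsurj : Function.Surjective f := by
    have h1 : Function.Surjective ((↑) : ℕ → ZMod p) := ZMod.natCast_zmod_surjective
    have h2 : (fun n : ℕ => f (n : ZMod N)) = ((↑) : ℕ → ZMod p) := by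
      funext n; exact map_natCast f n
    intro x
    obtain ⟨n, hn⟩ := h1 x
    exact ⟨(n : ZMod N), by rw [← hn, ← h2]⟩
  -- the target set B
  set B : Set (ZMod N) := {g | f g ≠ 0} with hB
  -- cardinality of B
  have hkerN : N = p * Nat.card f.toAddMonoidHom.ker := by
    have hq1 : Nat.card (ZMod N ⧸ f.toAddMonoidHom.ker) = p := by
      have := Nat.card_congr (QuotientAddGroup.quotientKerEquivOfSurjective
        f.toAddMonoidHom hsurj).toEquiv
      rw [Nat.card_zmod] at this
      exact this
    have := AddSubgroup.card_eq_card_quotient_mul_card_addSubgroup f.toAddMonoidHom.ker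
    rw [Nat.card_zmod, hq1] at this
    exact this
  have hBcompl : Bᶜ = (f.toAddMonoidHom.ker : Set (ZMod N)) := by
    ext g
    simp [hB, AddMonoidHom.mem_ker]
  have hcardB : B.ncard + Nat.card f.toAddMonoidHom.ker = N := by
    have h1 := Set.ncard_add_ncard_compl B (Set.toFinite _) (Set.toFinite _)
    rw [hBcompl, Nat.card_zmod] at h1
    have h2 : ((f.toAddMonoidHom.ker : Set (ZMod N))).ncard
        = Nat.card f.toAddMonoidHom.ker := (Nat.card_coe_set_eq _).symm
    rw [h2] at h1
    exact h1
  -- the multiplier set and splitter subset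
  set J : Set ℤ := {j : ℤ | j ∈ Set.Icc (1 : ℤ) (k : ℤ) ∧ ¬ (p : ℤ) ∣ j} with hJ
  set S₀ : Set (ZMod N) := {s | s ∈ S ∧ f s ≠ 0} with hS₀
  set C : Set (ℤ × ZMod N) :=
    {ms | ms.1 ∈ Set.Icc (1 : ℤ) (k : ℤ) ∧ ms.2 ∈ S ∧ ms.1 • ms.2 ∈ B} with hC
  -- key pointwise fact
  have key : ∀ (j : ℤ) (s : ZMod N), (j • s ∈ B) ↔ (¬ (p : ℤ) ∣ j ∧ f s ≠ 0) := by
    intro j s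
    have : f (j • s) = (j : ZMod p) * f s := by
      rw [map_zsmul, zsmul_eq_mul]
    simp only [hB, Set.mem_setOf_eq, this, mul_ne_zero_iff, Ne,
      ZMod.intCast_zmod_eq_zero_iff_dvd]
  -- C is a product
  have hCprod : C = J ×ˢ S₀ := by
    ext ⟨j, s⟩
    simp only [hC, Set.mem_setOf_eq, Set.mem_prod, hJ, hS₀, key]
    tauto
  -- bijection C ≃ B from the splitting
  have hbij : Nat.card C = Nat.card B := by
    refine Nat.card_congr (Equiv.ofBijective
      (fun x => ⟨x.1.1 • x.1.2, x.2.2.2⟩) ⟨?_, ?_⟩)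
    · rintro ⟨⟨j, s⟩, hj, hs, hmem⟩ ⟨⟨j', s'⟩, hj', hs', hmem'⟩ heq
      have hg : (j • s : ZMod N) = j' • s' := by
        simpa using congrArg Subtype.val heq
      have hne : (j • s : ZMod N) ≠ 0 := by
        intro h0
        rw [h0] at hmem
        simp [hB] at hmem
      obtain ⟨u, hu, huniq⟩ := h (j • s) hne
      have e1 : ((j, s) : ℤ × ZMod N) = u := huniq (j, s) ⟨hj, hs, rfl⟩
      have e2 : ((j', s') : ℤ × ZMod N) = u := huniq (j', s') ⟨hj', hs', hg.symm⟩
      simp only [Subtype.mk.injEq]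
      rw [e1, e2]
    · rintro ⟨g, hg⟩
      have hne : g ≠ 0 := by
        intro h0; rw [h0] at hg; simp [hB] at hg
      obtain ⟨⟨j, s⟩, ⟨hj, hs, heq⟩, -⟩ := h g hne
      exact ⟨⟨(j, s), hj, hs, by rw [heq]; exact hg⟩, Subtype.ext heq⟩
  -- card of product
  have hprod : Nat.card C = Nat.card J * Nat.card S₀ := by
    rw [hCprod, Nat.card_congr (Equiv.Set.prod J S₀), Nat.card_prod]
  -- card of J
  have hJcard : Nat.card J = k - k / p := by
    have hJfin : J = (((Finset.Ioc 0 k).filter (fun j => ¬ p ∣ j)).image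
        ((↑) : ℕ → ℤ) : Finset ℤ) := by
      ext j
      simp only [hJ, Set.mem_setOf_eq, Finset.coe_image, Set.mem_image,
        Finset.mem_coe, Finset.mem_filter, Finset.mem_Ioc, Set.mem_Icc]
      constructor
      · rintro ⟨⟨h1, h2⟩, h3⟩
        refine ⟨j.toNat, ⟨⟨by omega, by omega⟩, ?_⟩, by omega⟩
        intro hd
        have hj' : ((j.toNat : ℕ) : ℤ) = j := by omega
        exact h3 (hj' ▸ (Int.natCast_dvd_natCast.mpr hd))
      · rintro ⟨n, ⟨⟨h1, h2⟩, h3⟩, rfl⟩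
        refine ⟨⟨by omega, by omega⟩, fun hd => h3 ?_⟩
        rwa [Int.natCast_dvd_natCast] at hd
    rw [Nat.card_coe_set_eq, hJfin, Set.ncard_coe_finset,
      Finset.card_image_of_injective _ (@Nat.cast_injective ℤ _ _)]
    have hfil := Nat.Ioc_filter_dvd_card_eq_div k p
    have hsplit : ((Finset.Ioc 0 k).filter (fun j => ¬ p ∣ j)).card
        + ((Finset.Ioc 0 k).filter (fun j => p ∣ j)).card = (Finset.Ioc 0 k).card := by
      rw [Nat.add_comm, Finset.card_filter_add_card_filter_not]
    rw [Nat.card_Ioc] at hsplit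
    omega
  -- put it together
  intro hcontra
  set q := p ^ β * m with hq
  have hq0 : 0 < q := by positivity
  have hNq : N = p * q := by rw [hN, hq, pow_succ]; ring
  have hker : Nat.card f.toAddMonoidHom.ker = q := by
    refine Nat.eq_of_mul_eq_mul_left hp0 ?_
    rw [← hkerN]
    exact hNq
  obtain ⟨r, hr⟩ : ∃ r, p = r + 1 := ⟨p - 1, by omega⟩
  have hqp : q * (p - 1) + q = p * q := by
    subst hr; simp only [Nat.add_sub_cancel]; ring
  have hBcard : B.ncard = q * (p - 1) := by
    rw [hker] at hcardB
    omega
  have hfinal : (k - k / p) * Nat.card S₀ = q * (p - 1) := by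
    rw [← hJcard, ← hprod, hbij, Nat.card_coe_set_eq, hBcard]
  have hdvd2 : p ^ β * p ∣ p ^ β * (m * (p - 1)) := by
    rw [← pow_succ]
    calc p ^ (β + 1) ∣ (k - k / p) * Nat.card S₀ := hcontra.mul_right _
      _ = q * (p - 1) := hfinal
      _ = p ^ β * (m * (p - 1)) := by rw [hq, mul_assoc]
  have hpdvd : p ∣ m * (p - 1) :=
    (Nat.mul_dvd_mul_iff_left (by positivity : 0 < p ^ β)).mp hdvd2
  rcases hp.dvd_mul.mp hpdvd with h1 | h1
  · exact hpm h1
  · have hp2 := hp.two_le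
    have := Nat.le_of_dvd (by omega) h1
    omega
end

section
/- Let N ≥ 2 and k ≥ 1 be integers with k < N, and suppose the set {1, 2, …, k} splits ℤ_N with splitter set S. Let H be a subgroup of ℤ_N with |H| < N, and let d ≥ 1 be an integer with d · |H| ≤ k. If s and s' are distinct elements of S that are both units of ℤ_N, then the sets {t • (s + x) : 1 ≤ t ≤ d, x ∈ H} and {t • (s' + x) : 1 ≤ t ≤ d, x ∈ H} are disjoint. -/
/-- Lemma 2(a): for distinct unit elements `s, s'` of the splitter set `S`, the sets
`{t • (s + x) : 1 ≤ t ≤ d, x ∈ H}` and `{t • (s' + x) : 1 ≤ t ≤ d, x ∈ H}` are disjoint,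
provided `d · |H| ≤ k`. -/
theorem splitting_translates_disjoint
    (N k d : ℕ) (hN : 2 ≤ N) (hk : 1 ≤ k) (hkN : k < N)
    (S : Set (ZMod N)) (h : IsSplitting k S)
    (H : AddSubgroup (ZMod N)) (hH : Nat.card H < N)
    (hd : 1 ≤ d) (hdH : d * Nat.card H ≤ k)
    (s s' : ZMod N) (hs : s ∈ S) (hs' : s' ∈ S) (hss' : s ≠ s')
    (hu : IsUnit s) (hu' : IsUnit s') :
    Disjoint {g : ZMod N | ∃ t : ℕ, 1 ≤ t ∧ t ≤ d ∧ ∃ x ∈ H, g = t • (s + x)}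
      {g : ZMod N | ∃ t : ℕ, 1 ≤ t ∧ t ≤ d ∧ ∃ x ∈ H, g = t • (s' + x)} := by
  haveI : NeZero N := ⟨by omega⟩
  rw [Set.disjoint_left]
  rintro g ⟨t, ht1, htd, x, hx, rfl⟩ ⟨t', ht1', htd', x', hx', hg'⟩
  set n := Nat.card H with hn
  have hn1 : 1 ≤ n := Nat.card_pos
  -- n • y = 0 for y ∈ H
  have key : ∀ y : ZMod N, y ∈ H → n • y = 0 := by
    intro y hy
    have h0 : n • (⟨y, hy⟩ : H) = 0 := card_nsmul_eq_zero'
    simpa using congrArg (Subtype.val) h0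
  -- kill the H-components
  have hmain : ∀ (u : ℕ) (y z : ZMod N), y ∈ H → (n * u) • (z + y) = (n * u) • z := by
    intro u y z hy
    have : (n * u) • y = 0 := by
      rw [mul_comm, mul_smul, key y hy, smul_zero]
    rw [smul_add, this, add_zero]
  have heq : (n * t) • s = (n * t') • s' := by
    have h1 : (n * t) • (s + x) = n • (t • (s + x)) := mul_smul n t (s + x)
    have h2 : (n * t') • (s' + x') = n • (t' • (s' + x')) := mul_smul n t' (s' + x')
    rw [← hmain t x s hx, ← hmain t' x' s' hx', h1, h2, ← hg']
  -- bounds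
  have hb : ∀ u : ℕ, 1 ≤ u → u ≤ d → 1 ≤ n * u ∧ n * u ≤ k := by
    intro u hu1 hud
    constructor
    · exact Nat.one_le_iff_ne_zero.mpr (by positivity)
    · calc n * u ≤ n * d := Nat.mul_le_mul_left n hud
        _ = d * n := mul_comm n d
        _ ≤ k := hdH
  obtain ⟨hnt1, hntk⟩ := hb t ht1 htd
  obtain ⟨hnt1', hntk'⟩ := hb t' ht1' htd'
  -- the common value is nonzero
  have hne : (n * t) • s ≠ 0 := by
    rw [nsmul_eq_mul]
    intro hzero
    rw [mul_comm] at hzero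
    have : ((n * t : ℕ) : ZMod N) = 0 := hu.mul_right_eq_zero.mp hzero
    rw [ZMod.natCast_eq_zero_iff] at this
    have := Nat.le_of_dvd (by omega) this
    omega
  -- uniqueness of splitting representation
  have huniq := (h ((n * t) • s) hne).unique
    (y₁ := (((n * t : ℕ) : ℤ), s)) (y₂ := (((n * t' : ℕ) : ℤ), s'))
  have hfin : (((n * t : ℕ) : ℤ), s) = (((n * t' : ℕ) : ℤ), s') := by
    apply huniq
    · refine ⟨⟨?_, ?_⟩, hs, ?_⟩
      · show (1:ℤ) ≤ ((n * t : ℕ) : ℤ); exact_mod_cast hnt1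
      · show ((n * t : ℕ) : ℤ) ≤ (k : ℤ); exact_mod_cast hntk
      · simp [natCast_zsmul]
    · refine ⟨⟨?_, ?_⟩, hs', ?_⟩
      · show (1:ℤ) ≤ ((n * t' : ℕ) : ℤ); exact_mod_cast hnt1'
      · show ((n * t' : ℕ) : ℤ) ≤ (k : ℤ); exact_mod_cast hntk'
      · simp [natCast_zsmul, heq]
  exact hss' (congrArg Prod.snd hfin)
end

section
/- Let N ≥ 2 and k ≥ 1 be integers with k < N, and suppose the set {1, 2, …, k} splits ℤ_N with splitter set S. Let H be a subgroup of ℤ_N with |H| < N, and let d ≥ 1 be an integer with d · |H| ≤ k such that every integer t with 1 ≤ t ≤ d is coprime to N. Let s₁, …, s_r be the distinct elements of S that are units of ℤ_N, and for each i set W_i = {s_i + x : x ∈ H, s_i + x is a unit of ℤ_N} and T·W_i = {t • w : 1 ≤ t ≤ d, w ∈ W_i}. Then the union of the sets T·W_i (1 ≤ i ≤ r) is contained in the group of units of ℤ_N, and the sum of the cardinalities |T·W_1| + ⋯ + |T·W_r| is at most φ(N), where φ is Euler's totient function. -/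
/-!
Put `m = |H|`. Since `m • x = 0` for `x ∈ H`, every `g = t • (s + x)` in `T·W_s` satisfies
`m • g = (t * m) • s`, with multiplier `1 ≤ t * m ≤ d * m ≤ k`; as `s` is a unit and `k < N`
this element is nonzero. Uniqueness in the splitting then recovers `s` from `g`, so the sets
`T·W_s` are pairwise disjoint. They consist of units because each `t ≤ d` is coprime to `N`,
hence their sizes add up to at most the number `φ(N)` of units.
-/

/-- The set `T·W_s` of the paper, with `T = {1, …, d}` and `W_s = {s + x : x ∈ H, s + x a unit}`. -/
def scaledUnitTranslates {R : Type*} [Ring R] (H : AddSubgroup R) (d : ℕ) (s : R) : Set R :=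
  {g | ∃ t : ℕ, 1 ≤ t ∧ t ≤ d ∧ ∃ x ∈ H, IsUnit (s + x) ∧ g = t • (s + x)}

theorem IsSplitting.eq_of_zsmul_eq {G : Type*} [AddCommGroup G] {k : ℕ} {S : Set G}
    (h : IsSplitting k S) {m m' : ℤ} {s s' : G} (hm : m ∈ Set.Icc 1 (k : ℤ))
    (hm' : m' ∈ Set.Icc 1 (k : ℤ)) (hs : s ∈ S) (hs' : s' ∈ S) (heq : m • s = m' • s')
    (hne : m • s ≠ 0) : s = s' :=
  congrArg Prod.snd <|
    (h _ hne).unique (y₁ := (m, s)) (y₂ := (m', s')) ⟨hm, hs, rfl⟩ ⟨hm', hs', heq.symm⟩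

theorem ZMod.nsmul_ne_zero_of_isUnit {N n : ℕ} {s : ZMod N} (hs : IsUnit s) (hn : 0 < n)
    (hnN : n < N) : n • s ≠ 0 := by
  rw [nsmul_eq_mul, ne_eq, hs.mul_left_eq_zero, ZMod.natCast_eq_zero_iff]
  exact fun hdvd => (Nat.le_of_dvd hn hdvd).not_gt hnN

theorem ZMod.ncard_setOf_isUnit (N : ℕ) [NeZero N] :
    {g : ZMod N | IsUnit g}.ncard = Nat.totient N := by
  rw [← ZMod.card_units_eq_totient, ← Nat.card_eq_fintype_card]
  exact Set.ncard_range_of_injective Units.val_injective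

theorem Finset.sum_ncard_le_ncard_of_pairwiseDisjoint {ι α : Type*} [Finite α] {F : Finset ι}
    {W : ι → Set α} {U : Set α} (hW : (F : Set ι).PairwiseDisjoint W) (hU : ∀ i ∈ F, W i ⊆ U) :
    ∑ i ∈ F, (W i).ncard ≤ U.ncard := by
  rw [← finsum_mem_coe_finset, ← F.finite_toSet.ncard_biUnion (fun _ _ => Set.toFinite _) hW]
  exact Set.ncard_le_ncard (Set.iUnion₂_subset hU)

section scaledUnitTranslates

variable {R : Type*} [Ring R] (H : AddSubgroup R) (d : ℕ)

theorem scaledUnitTranslates_subset_setOf_isUnit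
    (hT : ∀ t : ℕ, 1 ≤ t → t ≤ d → IsUnit (t : R)) (s : R) :
    scaledUnitTranslates H d s ⊆ {g | IsUnit g} := by
  rintro _ ⟨t, ht1, htd, x, -, hunit, rfl⟩
  rw [Set.mem_ofPred_eq, nsmul_eq_mul]
  exact (hT t ht1 htd).mul hunit

theorem exists_card_nsmul_eq_of_mem_scaledUnitTranslates {s g : R}
    (hg : g ∈ scaledUnitTranslates H d s) :
    ∃ t : ℕ, 1 ≤ t ∧ t ≤ d ∧ Nat.card H • g = (t * Nat.card H) • s := by
  obtain ⟨t, ht1, htd, x, hx, -, rfl⟩ := hg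
  have hx0 : Nat.card H • x = 0 := congrArg Subtype.val (card_nsmul_eq_zero' (x := ⟨x, hx⟩))
  refine ⟨t, ht1, htd, ?_⟩
  rw [smul_comm, smul_add, hx0, add_zero, smul_smul]

end scaledUnitTranslates

theorem pairwiseDisjoint_scaledUnitTranslates {N k d : ℕ} {S : Set (ZMod N)}
    (h : IsSplitting k S) (hkN : k < N) {H : AddSubgroup (ZMod N)} (hdH : d * Nat.card H ≤ k) :
    {s ∈ S | IsUnit s}.PairwiseDisjoint (scaledUnitTranslates H d) := by
  have : NeZero N := ⟨by omega⟩
  have hH : 0 < Nat.card H := Nat.card_pos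
  have hmult : ∀ t, 1 ≤ t → t ≤ d → ((t * Nat.card H : ℕ) : ℤ) ∈ Set.Icc 1 (k : ℤ) :=
    fun t ht1 htd => ⟨by exact_mod_cast Nat.mul_pos ht1 hH,
      by exact_mod_cast (Nat.mul_le_mul_right _ htd).trans hdH⟩
  refine fun s ⟨hs, hsu⟩ s' ⟨hs', _⟩ hne => Set.disjoint_left.mpr fun g hg hg' => hne ?_
  obtain ⟨t, ht1, htd, hg⟩ := exists_card_nsmul_eq_of_mem_scaledUnitTranslates H d hg
  obtain ⟨t', ht1', htd', hg'⟩ := exists_card_nsmul_eq_of_mem_scaledUnitTranslates H d hg'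
  have hm := hmult t ht1 htd
  refine h.eq_of_zsmul_eq hm (hmult t' ht1' htd') hs hs' ?_ ?_
  · rw [natCast_zsmul, natCast_zsmul, ← hg, ← hg']
  · rw [natCast_zsmul]
    exact ZMod.nsmul_ne_zero_of_isUnit hsu (Nat.mul_pos ht1 hH) (by have := hm.2; omega)

open scoped Classical in
theorem splitting_translates_in_units_sum_le_totient_general
    (N k d : ℕ) (hkN : k < N)
    (S : Finset (ZMod N)) (h : IsSplitting k (S : Set (ZMod N)))
    (H : AddSubgroup (ZMod N))
    (hdH : d * Nat.card H ≤ k)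
    (hT : ∀ t : ℕ, 1 ≤ t → t ≤ d → Nat.Coprime t N) :
    (∀ s ∈ S, IsUnit s →
        {g : ZMod N | ∃ t : ℕ, 1 ≤ t ∧ t ≤ d ∧
            ∃ x ∈ H, IsUnit (s + x) ∧ g = t • (s + x)}
          ⊆ {g : ZMod N | IsUnit g}) ∧
      ∑ s ∈ S.filter (fun s => IsUnit s),
          {g : ZMod N | ∃ t : ℕ, 1 ≤ t ∧ t ≤ d ∧
              ∃ x ∈ H, IsUnit (s + x) ∧ g = t • (s + x)}.ncard
        ≤ Nat.totient N := by
  have : NeZero N := ⟨by omega⟩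
  have hunits := scaledUnitTranslates_subset_setOf_isUnit H d
    fun t ht1 htd => (ZMod.isUnit_iff_coprime t N).mpr (hT t ht1 htd)
  refine ⟨fun s _ _ => hunits s, ?_⟩
  refine (Finset.sum_ncard_le_ncard_of_pairwiseDisjoint ?_ fun s _ => hunits s).trans
    (ZMod.ncard_setOf_isUnit N).le
  rw [Finset.coe_filter]
  exact pairwiseDisjoint_scaledUnitTranslates h hkN hdH

open scoped Classical in
/-- Lemma 2(b): the sets `T·W_i`, for `s_i` ranging over the unit elements of the
splitter set `S`, all lie in the unit group of `ℤ_N`, and the sum of their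
cardinalities is at most `φ(N)`. -/
theorem splitting_translates_in_units_sum_le_totient
    (N k d : ℕ) (hN : 2 ≤ N) (hk : 1 ≤ k) (hkN : k < N)
    (S : Finset (ZMod N)) (h : IsSplitting k (S : Set (ZMod N)))
    (H : AddSubgroup (ZMod N)) (hH : Nat.card H < N)
    (hd : 1 ≤ d) (hdH : d * Nat.card H ≤ k)
    (hT : ∀ t : ℕ, 1 ≤ t → t ≤ d → Nat.Coprime t N) :
    (∀ s ∈ S, IsUnit s →
        {g : ZMod N | ∃ t : ℕ, 1 ≤ t ∧ t ≤ d ∧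
            ∃ x ∈ H, IsUnit (s + x) ∧ g = t • (s + x)}
          ⊆ {g : ZMod N | IsUnit g}) ∧
      ∑ s ∈ S.filter (fun s => IsUnit s),
          {g : ZMod N | ∃ t : ℕ, 1 ≤ t ∧ t ≤ d ∧
              ∃ x ∈ H, IsUnit (s + x) ∧ g = t • (s + x)}.ncard
        ≤ Nat.totient N :=
  splitting_translates_in_units_sum_le_totient_general N k d hkN S h H hdH hT
end

section
/- Let N ≥ 2 and k ≥ 1 be integers with k < N, and suppose the set {1, 2, …, k} splits ℤ_N with splitter set S. Let H be a subgroup of ℤ_N with |H| < N, and let d ≥ 1 be an integer with d · |H| ≤ k such that every integer t with 1 ≤ t ≤ d is coprime to N. Let s ∈ S be a unit of ℤ_N, and set W = {s + x : x ∈ H, s + x is a unit of ℤ_N}. Then |{t • w : 1 ≤ t ≤ d, w ∈ W}| = d · |W|. -/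
/-- For a unit element `s` of the splitter set, with `W = {s + x : x ∈ H, s + x a unit}`,
one has `|{t • w : 1 ≤ t ≤ d, w ∈ W}| = d · |W|` when all `t ∈ [1, d]` are coprime to `N`. -/
theorem splitting_TW_card_eq
    (N k d : ℕ) (hN : 2 ≤ N) (hk : 1 ≤ k) (hkN : k < N)
    (S : Set (ZMod N)) (h : IsSplitting k S)
    (H : AddSubgroup (ZMod N)) (hH : Nat.card H < N)
    (hd : 1 ≤ d) (hdH : d * Nat.card H ≤ k)
    (hT : ∀ t : ℕ, 1 ≤ t → t ≤ d → Nat.Coprime t N)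
    (s : ZMod N) (hs : s ∈ S) (hu : IsUnit s) :
    {g : ZMod N | ∃ t : ℕ, 1 ≤ t ∧ t ≤ d ∧
        ∃ x ∈ H, IsUnit (s + x) ∧ g = t • (s + x)}.ncard
      = d * {w : ZMod N | ∃ x ∈ H, IsUnit (s + x) ∧ w = s + x}.ncard := by
  haveI : NeZero N := ⟨by omega⟩
  set W : Set (ZMod N) := {w : ZMod N | ∃ x ∈ H, IsUnit (s + x) ∧ w = s + x} with hWdef
  -- no unit multiple of s lies in H
  have hnot : ∀ u : ℕ, 1 ≤ u → u ≤ d → ¬ ((u : ZMod N) * s ∈ H) := by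
    intro u h1 h2 hmem
    have huu : IsUnit ((u : ZMod N)) := (ZMod.isUnit_iff_coprime u N).2 (hT u h1 h2)
    obtain ⟨v, hv⟩ := huu.mul hu
    have htop : H = ⊤ := by
      rw [eq_top_iff]
      intro g _
      have hg : g = (g * ↑v⁻¹).val • ((u : ZMod N) * s) := by
        rw [nsmul_eq_mul, ZMod.natCast_val, ZMod.cast_id, ← hv, mul_assoc,
          Units.inv_mul, mul_one]
      rw [hg]
      exact AddSubgroup.nsmul_mem H hmem _
    have : Nat.card H = N := by
      rw [htop]
      simpa [Nat.card_zmod] using Nat.card_congr (AddSubgroup.topEquiv (G := ZMod N)).toEquiv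
    omega
  have main : ∀ t t' : ℕ, ∀ x x' : ZMod N, x ∈ H → x' ∈ H → t' < t → t ≤ d →
      (t : ZMod N) * (s + x) = (t' : ZMod N) * (s + x') → False := by
    intro t t' x x' hx hx' hlt hle heq
    apply hnot (t - t') (by omega) (by omega)
    have key : ((t - t' : ℕ) : ZMod N) * s = (t' : ZMod N) * x' - (t : ZMod N) * x := by
      rw [Nat.cast_sub hlt.le]
      linear_combination heq
    rw [key]
    refine AddSubgroup.sub_mem H ?_ ?_
    · simpa [nsmul_eq_mul] using AddSubgroup.nsmul_mem H hx' t'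
    · simpa [nsmul_eq_mul] using AddSubgroup.nsmul_mem H hx t
  have inj : Set.InjOn (fun p : ℕ × ZMod N => p.1 • p.2) ((Set.Icc 1 d) ×ˢ W) := by
    rintro ⟨t, w⟩ ⟨ht, x, hx, hux, rfl⟩ ⟨t', w'⟩ ⟨ht', x', hx', hux', rfl⟩ heq
    simp only [nsmul_eq_mul] at heq
    simp only [Set.mem_Icc] at ht ht'
    have htt : t = t' := by
      rcases lt_trichotomy t t' with hlt | heqt | hlt
      · exact absurd (heq.symm) (fun hh => main t' t x' x hx' hx hlt ht'.2 hh)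
      · exact heqt
      · exact absurd heq (fun hh => main t t' x x' hx hx' hlt ht.2 hh)
    subst htt
    have hun : IsUnit ((t : ZMod N)) := (ZMod.isUnit_iff_coprime t N).2 (hT t ht.1 ht.2)
    have := hun.mul_left_cancel heq
    exact Prod.ext rfl this
  have himg : {g : ZMod N | ∃ t : ℕ, 1 ≤ t ∧ t ≤ d ∧
      ∃ x ∈ H, IsUnit (s + x) ∧ g = t • (s + x)}
      = (fun p : ℕ × ZMod N => p.1 • p.2) '' ((Set.Icc 1 d) ×ˢ W) := by
    ext g
    simp only [Set.mem_setOf_eq, Set.mem_image, Set.mem_prod, Set.mem_Icc, hWdef]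
    constructor
    · rintro ⟨t, h1, h2, x, hx, hux, rfl⟩
      exact ⟨⟨t, s + x⟩, ⟨⟨h1, h2⟩, x, hx, hux, rfl⟩, rfl⟩
    · rintro ⟨⟨t, w⟩, ⟨⟨h1, h2⟩, x, hx, hux, rfl⟩, rfl⟩
      exact ⟨t, h1, h2, x, hx, hux, rfl⟩
  rw [himg, Set.ncard_image_of_injOn inj]
  rw [← Nat.card_coe_set_eq, Nat.card_congr (Equiv.Set.prod _ _), Nat.card_prod,
    Nat.card_coe_set_eq, Nat.card_coe_set_eq, ← Finset.coe_Icc,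
    Set.ncard_coe_finset, Nat.card_Icc]
  rw [Nat.add_sub_cancel]
end

section
/- Let N ≥ 2 be an integer, let H be a subgroup of ℤ_N of order h, and let s be a unit of ℤ_N. Then the number of elements x ∈ H such that s + x is a unit of ℤ_N equals the product, over all primes q dividing h, of u_q, where u_q = q^{v_q(h)} if v_q(h) < v_q(N) and u_q = q^{v_q(h)−1}·(q − 1) if v_q(h) = v_q(N); here v_q denotes the q-adic valuation. -/
lemma tot_split (N h : ℕ) (hN : N ≠ 0) (hd : h ∣ N) (hh : h ≠ 0) :
    N.totient = (N / h).totient * ∏ q ∈ h.primeFactors,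
          (if h.factorization q < N.factorization q
            then q ^ h.factorization q
            else q ^ (h.factorization q - 1) * (q - 1)) := by
  set m := N / h with hm
  have hm0 : m ≠ 0 := by
    rw [hm]; exact Nat.div_ne_zero_iff_of_dvd hd |>.mpr ⟨hN, hh⟩
  have hmul : N = m * h := (Nat.div_mul_cancel hd).symm
  have hfac : ∀ q, N.factorization q = m.factorization q + h.factorization q := by
    intro q; rw [hmul, Nat.factorization_mul hm0 hh]; rfl
  have hms : m.primeFactors ⊆ N.primeFactors := Nat.primeFactors_mono ⟨h, hmul⟩ hN
  have hhs : h.primeFactors ⊆ N.primeFactors := Nat.primeFactors_mono hd hN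
  set G : ℕ → ℕ := fun q => if q ∈ m.primeFactors then q ^ (m.factorization q - 1) * (q - 1) else 1 with hG
  set U : ℕ → ℕ := fun q => if q ∈ h.primeFactors then
      (if h.factorization q < N.factorization q
            then q ^ h.factorization q
            else q ^ (h.factorization q - 1) * (q - 1)) else 1 with hU
  have e1 : m.totient = ∏ q ∈ N.primeFactors, G q := by
    rw [Nat.totient_eq_prod_factorization hm0, Finsupp.prod, Nat.support_factorization,
      ← Finset.prod_subset hms (fun q _ hq => by rw [hG]; exact if_neg hq)]
    exact Finset.prod_congr rfl fun q hq => by rw [hG]; exact (if_pos hq).symm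
  have e2 : (∏ q ∈ h.primeFactors,
          (if h.factorization q < N.factorization q
            then q ^ h.factorization q
            else q ^ (h.factorization q - 1) * (q - 1))) = ∏ q ∈ N.primeFactors, U q := by
    rw [← Finset.prod_subset hhs (fun q _ hq => by rw [hU]; exact if_neg hq)]
    exact Finset.prod_congr rfl fun q hq => by rw [hU]; exact (if_pos hq).symm
  rw [e1, e2, ← Finset.prod_mul_distrib, Nat.totient_eq_prod_factorization hN,
    Finsupp.prod, Nat.support_factorization]
  apply Finset.prod_congr rfl
  intro q hq
  have hqa : N.factorization q ≠ 0 :=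
    Finsupp.mem_support_iff.mp (by rwa [Nat.support_factorization])
  have hqm : q ∈ m.primeFactors ↔ m.factorization q ≠ 0 := by
    rw [← Nat.support_factorization, Finsupp.mem_support_iff]
  have hqh : q ∈ h.primeFactors ↔ h.factorization q ≠ 0 := by
    rw [← Nat.support_factorization, Finsupp.mem_support_iff]
  have ha := hfac q
  simp only [hG, hU]
  by_cases hb : h.factorization q = 0
  · have hc : m.factorization q ≠ 0 := by omega
    simp [hqm.mpr hc, hqh, hb, ha]
  · by_cases hc : m.factorization q = 0
    · have : ¬ h.factorization q < N.factorization q := by omega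
      have : h.factorization q = N.factorization q := by omega
      simp [hqm, hc, hqh.mpr hb, this]
    · have hlt : h.factorization q < N.factorization q := by omega
      rw [if_pos (hqm.mpr hc), if_pos (hqh.mpr hb), if_pos hlt,
        mul_assoc, mul_comm (q-1), ← mul_assoc, ← pow_add]
      congr 2
      omega

lemma ker_card_mul (N m : ℕ) [NeZero N] (hm0 : m ≠ 0) (hmdvd : m ∣ N) :
    Nat.card (ZMod.unitsMap hmdvd).ker * m.totient = N.totient := by
  have : NeZero m := ⟨hm0⟩
  have gs : Function.Surjective (ZMod.unitsMap hmdvd) := ZMod.unitsMap_surjective hmdvd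
  have h1 := Subgroup.card_eq_card_quotient_mul_card_subgroup (ZMod.unitsMap hmdvd).ker
  have h2 : Nat.card ((ZMod N)ˣ ⧸ (ZMod.unitsMap hmdvd).ker) = Nat.card (ZMod m)ˣ :=
    Nat.card_congr (QuotientGroup.quotientKerEquivOfSurjective _ gs).toEquiv
  rw [h2] at h1
  have h3 : Nat.card (ZMod N)ˣ = N.totient := by
    rw [Nat.card_eq_fintype_card, ZMod.card_units_eq_totient]
  have h4 : Nat.card (ZMod m)ˣ = m.totient := by
    rw [Nat.card_eq_fintype_card, ZMod.card_units_eq_totient]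
  rw [h3, h4] at h1
  rw [h1, Nat.mul_comm]

lemma mem_iff_cast_eq_zero (N h m : ℕ) [NeZero N] (H : AddSubgroup (ZMod N))
    (hcard : Nat.card H = h)
    (hdvd : h ∣ N) (hm : m = N / h) (hmdvd : m ∣ N) (hh0 : h ≠ 0) (hm0 : m ≠ 0) :
    ∀ x : ZMod N, x ∈ H ↔ ZMod.castHom hmdvd (ZMod m) x = 0 := by
  have hmul : N = m * h := by rw [hm]; exact (Nat.div_mul_cancel hdvd).symm
  set f := (ZMod.castHom hmdvd (ZMod m)).toAddMonoidHom with hf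
  have hfs : Function.Surjective f := by
    intro y
    refine ⟨(y.val : ZMod N), ?_⟩
    have : NeZero m := ⟨hm0⟩
    simp only [hf, RingHom.toAddMonoidHom_eq_coe, AddMonoidHom.coe_coe, map_natCast]
    exact ZMod.natCast_rightInverse y
  have hker : Nat.card f.ker = h := by
    have h1 := AddSubgroup.card_eq_card_quotient_mul_card_addSubgroup f.ker
    have h2 : Nat.card (ZMod N ⧸ f.ker) = Nat.card (ZMod m) :=
      Nat.card_congr (QuotientAddGroup.quotientKerEquivOfSurjective _ hfs).toEquiv
    rw [h2, Nat.card_zmod, Nat.card_zmod] at h1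
    have h5 : m * h = m * Nat.card f.ker := by rw [← hmul]; exact h1
    exact (Nat.eq_of_mul_eq_mul_left (Nat.pos_of_ne_zero hm0) h5).symm
  have hle : H ≤ f.ker := by
    intro x hx
    have h1 : addOrderOf (⟨x, hx⟩ : H) ∣ h := hcard ▸ addOrderOf_dvd_natCard _
    have h2 : h • x = 0 := by
      have := addOrderOf_dvd_iff_nsmul_eq_zero.mp h1
      exact congrArg Subtype.val this
    have h3 : (h : ZMod N) * x = 0 := by rw [← nsmul_eq_mul]; exact h2
    have h4 : ((h * x.val : ℕ) : ZMod N) = 0 := by push_cast [ZMod.natCast_val, ZMod.cast_id]; exact h3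
    have h5 : N ∣ h * x.val := (ZMod.natCast_eq_zero_iff _ _).mp h4
    have h6 : m ∣ x.val := by
      rcases h5 with ⟨c, hc⟩
      refine ⟨c, ?_⟩
      have : h * x.val = h * (m * c) := by rw [hc, hmul]; ring
      exact Nat.eq_of_mul_eq_mul_left (Nat.pos_of_ne_zero hh0) this
    show f x = 0
    have : f x = (x.val : ZMod m) := by simp [hf, ZMod.natCast_val]
    rw [this, ZMod.natCast_eq_zero_iff]
    exact h6
  have hHf : H = f.ker := by
    apply AddSubgroup.eq_of_le_of_card_ge hle
    rw [hker, hcard]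
  intro x
  rw [hHf]
  exact Iff.rfl

lemma ncard_eq_ker_card (N m : ℕ) [NeZero N] (hmdvd : m ∣ N) (s : ZMod N) (hs : IsUnit s)
    (H : AddSubgroup (ZMod N))
    (hmem : ∀ x : ZMod N, x ∈ H ↔ ZMod.castHom hmdvd (ZMod m) x = 0) :
    {x : ZMod N | x ∈ H ∧ IsUnit (s + x)}.ncard = Nat.card (ZMod.unitsMap hmdvd).ker := by
  rw [← Nat.card_coe_set_eq]
  refine (Nat.card_congr (Equiv.ofBijective ?_ ⟨?_, ?_⟩)).symm
  · refine fun u => ⟨((hs.unit * u.1 : (ZMod N)ˣ) : ZMod N) - s, ?_, ?_⟩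
    · rw [hmem]
      have hval : ZMod.castHom hmdvd (ZMod m) ((hs.unit * u.1 : (ZMod N)ˣ) : ZMod N)
          = ZMod.castHom hmdvd (ZMod m) s := by
        have h1 : ZMod.unitsMap hmdvd (hs.unit * u.1) = ZMod.unitsMap hmdvd hs.unit := by
          rw [map_mul, u.2, mul_one]
        have h2 := congrArg (Units.val) h1
        simp only [ZMod.unitsMap_def, Units.coe_map, MonoidHom.coe_coe, IsUnit.unit_spec] at h2
        exact h2
      rw [map_sub, hval, sub_self]
    · have : s + (((hs.unit * u.1 : (ZMod N)ˣ) : ZMod N) - s)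
          = ((hs.unit * u.1 : (ZMod N)ˣ) : ZMod N) := by ring
      rw [this]
      exact (hs.unit * u.1).isUnit
  · intro u v huv
    have h1 := congrArg Subtype.val huv
    simp only [sub_left_inj] at h1
    have h2 : hs.unit * u.1 = hs.unit * v.1 := Units.ext h1
    exact Subtype.ext (mul_left_cancel h2)
  · rintro ⟨x, hx1, hx2⟩
    have hcast : ZMod.castHom hmdvd (ZMod m) (s + x) = ZMod.castHom hmdvd (ZMod m) s := by
      rw [map_add, (hmem x).mp hx1, add_zero]
    have hker : hs.unit⁻¹ * hx2.unit ∈ (ZMod.unitsMap hmdvd).ker := by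
      rw [MonoidHom.mem_ker, map_mul]
      have : ZMod.unitsMap hmdvd hx2.unit = ZMod.unitsMap hmdvd hs.unit := by
        apply Units.ext
        show (Units.map (ZMod.castHom hmdvd (ZMod m)).toMonoidHom hx2.unit : ZMod m) = (Units.map (ZMod.castHom hmdvd (ZMod m)).toMonoidHom hs.unit : ZMod m)
        simp only [Units.coe_map, MonoidHom.coe_coe, IsUnit.unit_spec]
        exact hcast
      rw [this, map_inv, inv_mul_cancel]
    refine ⟨⟨hs.unit⁻¹ * hx2.unit, hker⟩, ?_⟩
    apply Subtype.ext
    show ((hs.unit * (hs.unit⁻¹ * hx2.unit) : (ZMod N)ˣ) : ZMod N) - s = x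
    rw [← mul_assoc, mul_inv_cancel, one_mul, hx2.unit_spec]
    ring

/-- For a subgroup `H` of `ℤ_N` of order `h` and a unit `s` of `ℤ_N`, the number of
`x ∈ H` with `s + x` a unit equals `∏_{q prime, q ∣ h} u_q`, where `u_q = q^{v_q(h)}`
if `v_q(h) < v_q(N)` and `u_q = q^{v_q(h)−1}(q−1)` if `v_q(h) = v_q(N)`. -/
theorem coset_units_count
    (N : ℕ) (hN : 2 ≤ N) (H : AddSubgroup (ZMod N)) (s : ZMod N) (hs : IsUnit s) :
    {x : ZMod N | x ∈ H ∧ IsUnit (s + x)}.ncard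
      = ∏ q ∈ (Nat.card H).primeFactors,
          (if (Nat.card H).factorization q < N.factorization q
            then q ^ (Nat.card H).factorization q
            else q ^ ((Nat.card H).factorization q - 1) * (q - 1)) := by
  have hNe : NeZero N := ⟨by omega⟩
  have hN0 : N ≠ 0 := by omega
  have hh0 : Nat.card H ≠ 0 := Nat.card_pos.ne'
  have hdvd : Nat.card H ∣ N := by
    have := AddSubgroup.card_addSubgroup_dvd_card H
    rwa [Nat.card_zmod] at this
  set m := N / Nat.card H with hm
  have hmdvd : m ∣ N := Nat.div_dvd_of_dvd hdvd
  have hm0 : m ≠ 0 := by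
    rw [hm]; exact Nat.div_ne_zero_iff_of_dvd hdvd |>.mpr ⟨hN0, hh0⟩
  have hmem := mem_iff_cast_eq_zero N (Nat.card H) m H rfl hdvd hm hmdvd hh0 hm0
  rw [ncard_eq_ker_card N m hmdvd s hs H hmem]
  have hk := ker_card_mul N m hm0 hmdvd
  have ht := tot_split N (Nat.card H) hN0 hdvd hh0
  rw [← hm] at ht
  have hφm : 0 < m.totient := Nat.totient_pos.mpr (Nat.pos_of_ne_zero hm0)
  rw [ht] at hk
  have : m.totient * Nat.card (ZMod.unitsMap hmdvd).ker
      = m.totient * ∏ q ∈ (Nat.card H).primeFactors,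
          (if (Nat.card H).factorization q < N.factorization q
            then q ^ (Nat.card H).factorization q
            else q ^ ((Nat.card H).factorization q - 1) * (q - 1)) := by
    rw [mul_comm m.totient]; exact hk
  exact Nat.eq_of_mul_eq_mul_left hφm this
end

section
/- Let p be a prime, let k ≥ 1 be an integer, and set c = k − ⌊k/p⌋. Let P ≥ 1 be an integer with p ∤ P such that every prime divisor of P divides c. Then the number of integers x with 1 ≤ x ≤ k and gcd(x, p·P) = 1 equals the number of integers x with 1 ≤ x ≤ c and gcd(x, P) = 1. -/
open Finset

-- floor identity
lemma floor_id (p q k : ℕ) (hp : 0 < p) (hq : 0 < q)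
    (hd : q ∣ (k - k / p)) : k / q - k / (q * p) = (k - k / p) / q := by
  obtain ⟨t, ht⟩ := hd
  have hqp : 0 < q * p := Nat.mul_pos hq hp
  set e := k / (q * p) with he
  set r := k % (q * p) with hrdef
  have hk : k = q * p * e + r := (Nat.div_add_mod k (q*p)).symm
  have hrlt : r < q * p := Nat.mod_lt _ hqp
  set u := r / p with hu
  set v := r % p with hv
  have hr1 : r = p * u + v := (Nat.div_add_mod r p).symm
  have hvlt : v < p := Nat.mod_lt _ hp
  set w := r / q with hw
  set z := r % q with hz
  have hr2 : r = q * w + z := (Nat.div_add_mod r q).symm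
  have hzlt : z < q := Nat.mod_lt _ hq
  have hult : u < q := by
    rw [hu]
    exact (Nat.div_lt_iff_lt_mul hp).mpr hrlt
  have hkp : k / p = q * e + u := by
    have hke : k = v + (q * e + u) * p := by rw [hk, hr1]; ring
    rw [hke, Nat.add_mul_div_right _ _ hp, Nat.div_eq_of_lt hvlt, Nat.zero_add]
  have hkq : k / q = p * e + w := by
    have hke : k = z + (p * e + w) * q := by rw [hk, hr2]; ring
    rw [hke, Nat.add_mul_div_right _ _ hq, Nat.div_eq_of_lt hzlt, Nat.zero_add]
  have hple : k / p ≤ k := Nat.div_le_self _ _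
  have h1 : k = q * t + k / p := by omega
  have h1' : k = q * t + (q * e + u) := by rw [h1, hkp]
  have h2 : k = q * p * e + (q * w + z) := by rw [hk, hr2]
  have hkey : u + (t + e) * q = z + (p * e + w) * q := by
    have h3 : q * t + (q * e + u) = q * p * e + (q * w + z) := by omega
    calc u + (t + e) * q = q * t + (q * e + u) := by ring
    _ = q * p * e + (q * w + z) := h3
    _ = z + (p * e + w) * q := by ring
  have huz : u = z := by
    have h4 := congrArg (· % q) hkey
    simp only [Nat.add_mul_mod_self_right] at h4
    rwa [Nat.mod_eq_of_lt hult, Nat.mod_eq_of_lt hzlt] at h4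
  have hte : t + e = p * e + w := by
    have h5 : (t + e) * q = (p * e + w) * q := by omega
    exact Nat.eq_of_mul_eq_mul_right hq h5
  rw [hkq, ht, Nat.mul_div_cancel_left _ hq, ← hte]
  omega

-- count of non-multiples
lemma count_not_dvd (N d : ℕ) (hd : 0 < d) :
    ((Icc 1 N).filter (fun x => ¬ d ∣ x)).card = N - N / d := by
  have h0 : Icc 1 N = Ioc 0 N := rfl
  have h1 : ((Icc 1 N).filter (fun x => d ∣ x)).card = N / d := by
    rw [h0]; exact Nat.Ioc_filter_dvd_card_eq_div N d
  have h2 := Finset.card_filter_add_card_filter_not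
    (s := Icc 1 N) (p := fun x => d ∣ x)
  have h3 : (Icc 1 N).card = N := by rw [Nat.card_Icc]; omega
  omega

-- recurrence
lemma card_step (N m q : ℕ) (hq : q.Prime) (hqm : ¬ q ∣ m) :
    ((Icc 1 N).filter (fun x => Nat.Coprime x m)).card
      = ((Icc 1 N).filter (fun x => Nat.Coprime x (q * m))).card
        + ((Icc 1 (N / q)).filter (fun x => Nat.Coprime x m)).card := by
  have hsplit := Finset.card_filter_add_card_filter_not
    (s := (Icc 1 N).filter (fun x => Nat.Coprime x m)) (p := fun x => ¬ q ∣ x)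
  have hA : ((Icc 1 N).filter (fun x => Nat.Coprime x m)).filter (fun x => ¬ q ∣ x)
      = (Icc 1 N).filter (fun x => Nat.Coprime x (q * m)) := by
    rw [Finset.filter_filter]
    apply Finset.filter_congr
    intro x _
    simp only [Nat.coprime_mul_iff_right, eq_iff_iff]
    constructor
    · rintro ⟨h1, h2⟩
      exact ⟨Nat.coprime_comm.mp (hq.coprime_iff_not_dvd.mpr h2), h1⟩
    · rintro ⟨h1, h2⟩
      exact ⟨h2, fun hdvd => hq.coprime_iff_not_dvd.mp (Nat.coprime_comm.mpr h1) hdvd⟩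
  have hB : (((Icc 1 N).filter (fun x => Nat.Coprime x m)).filter
        (fun x => ¬ ¬ q ∣ x)).card
      = ((Icc 1 (N / q)).filter (fun x => Nat.Coprime x m)).card := by
    rw [Finset.filter_filter]
    symm
    apply Finset.card_bij (fun y _ => q * y)
    · intro y hy
      simp only [Finset.mem_filter, Finset.mem_Icc] at hy ⊢
      obtain ⟨⟨hy1, hy2⟩, hy3⟩ := hy
      refine ⟨⟨Nat.mul_pos hq.pos hy1, ?_⟩,
        (Nat.Coprime.mul (hq.coprime_iff_not_dvd.mpr hqm) hy3), by simp⟩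
      calc q * y ≤ q * (N / q) := Nat.mul_le_mul_left q hy2
      _ ≤ N := Nat.mul_div_le N q
    · intro a ha b hb h
      exact Nat.eq_of_mul_eq_mul_left hq.pos h
    · intro x hx
      simp only [Finset.mem_filter, Finset.mem_Icc, not_not] at hx
      obtain ⟨⟨hx1, hx2⟩, hx3, y, hy⟩ := hx
      refine ⟨y, ?_, hy.symm⟩
      simp only [Finset.mem_filter, Finset.mem_Icc]
      subst hy
      refine ⟨⟨?_, ?_⟩, ?_⟩
      · rcases Nat.eq_zero_or_pos y with h | h
        · rw [h, Nat.mul_zero] at hx1; omega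
        · exact h
      · exact (Nat.le_div_iff_mul_le hq.pos).mpr (by rwa [Nat.mul_comm] at hx2)
      · exact Nat.Coprime.coprime_dvd_left (Dvd.intro_left q rfl) hx3
  have hA' := congrArg Finset.card hA
  omega

lemma aux_main (p : ℕ) (hp : p.Prime) : ∀ P : ℕ, ∀ k : ℕ, 1 ≤ k → 1 ≤ P → ¬ p ∣ P →
    (∀ q : ℕ, q.Prime → q ∣ P → q ∣ (k - k / p)) →
    ((Icc 1 k).filter (fun x => Nat.Coprime x (p * P))).card
      = ((Icc 1 (k - k / p)).filter (fun x => Nat.Coprime x P)).card := by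
  intro P
  induction P using Nat.strong_induction_on with
  | _ P ih =>
  intro k hk hP hpP hPc
  rcases eq_or_lt_of_le hP with hP1 | hP2
  · -- P = 1
    subst hP1
    have hR : ((Icc 1 (k - k / p)).filter (fun x => Nat.Coprime x 1)) = Icc 1 (k - k / p) :=
      Finset.filter_true_of_mem (fun x _ => Nat.coprime_one_right x)
    rw [mul_one, hR]
    have hc : k - k / p ≥ 1 := by
      have := Nat.div_lt_self (Nat.lt_of_lt_of_le Nat.zero_lt_one hk) hp.one_lt
      omega
    have hL : ((Icc 1 k).filter (fun x => Nat.Coprime x p)).card = k - k / p := by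
      rw [← count_not_dvd k p hp.pos]
      apply congrArg
      apply Finset.filter_congr
      intro x _
      rw [Nat.coprime_comm]
      exact hp.coprime_iff_not_dvd
    rw [hL, Nat.card_Icc]
    omega
  · -- P > 1
    set q := P.minFac with hqdef
    have hqprime : q.Prime := Nat.minFac_prime (by omega)
    have hqP : q ∣ P := Nat.minFac_dvd P
    obtain ⟨P', hP'⟩ := hqP
    have hP'pos : 1 ≤ P' := by
      rcases Nat.eq_zero_or_pos P' with h | h
      · rw [h, Nat.mul_zero] at hP'; omega
      · exact h
    have hP'lt : P' < P := by
      have := hqprime.two_le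
      calc P' < 2 * P' := by omega
      _ ≤ q * P' := Nat.mul_le_mul_right P' hqprime.two_le
      _ = P := hP'.symm
    have hpP' : ¬ p ∣ P' := fun h => hpP (hP' ▸ Dvd.dvd.mul_left h q)
    have hqne : q ≠ p := by
      rintro rfl
      exact hpP (hP' ▸ Dvd.intro P' rfl)
    by_cases hqP' : q ∣ P'
    · -- reduce P to P'
      have hcopr : ∀ x : ℕ, Nat.Coprime x P ↔ Nat.Coprime x P' := by
        intro x
        constructor
        · intro h; exact Nat.Coprime.coprime_dvd_right (hP' ▸ Dvd.intro_left q rfl) h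
        · intro h
          rw [hP']
          exact Nat.Coprime.mul_right (Nat.Coprime.coprime_dvd_right hqP' h) h
      have hcopr2 : ∀ x : ℕ, Nat.Coprime x (p * P) ↔ Nat.Coprime x (p * P') := by
        intro x
        simp only [Nat.coprime_mul_iff_right]
        exact and_congr_right (fun _ => hcopr x)
      have e1 : (Icc 1 k).filter (fun x => Nat.Coprime x (p * P))
          = (Icc 1 k).filter (fun x => Nat.Coprime x (p * P')) :=
        Finset.filter_congr (fun x _ => by rw [hcopr2 x])
      have e2 : (Icc 1 (k - k / p)).filter (fun x => Nat.Coprime x P)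
          = (Icc 1 (k - k / p)).filter (fun x => Nat.Coprime x P') :=
        Finset.filter_congr (fun x _ => by rw [hcopr x])
      rw [e1, e2]
      exact ih P' hP'lt k hk hP'pos hpP'
        (fun r hr hrP' => hPc r hr (hP' ▸ Dvd.dvd.mul_left hrP' q))
    · -- q ∤ P'
      have hqpP' : ¬ q ∣ (p * P') := by
        intro h
        rcases (Nat.Prime.dvd_mul hqprime).mp h with h1 | h1
        · exact hqne ((Nat.prime_dvd_prime_iff_eq hqprime hp).mp h1)
        · exact hqP' h1
      set c := k - k / p with hc
      have hqc : q ∣ c := hPc q hqprime (hP' ▸ Dvd.intro P' rfl)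
      have hcpos : 1 ≤ c := by
        have := Nat.div_lt_self (Nat.lt_of_lt_of_le Nat.zero_lt_one hk) hp.one_lt
        omega
      have hclek : c ≤ k := by rw [hc]; exact Nat.sub_le _ _
      have hqlek : q ≤ k := le_trans (Nat.le_of_dvd hcpos hqc) hclek
      have hkq1 : 1 ≤ k / q := (Nat.one_le_div_iff hqprime.pos).mpr hqlek
      -- key floor identity
      have hfi : k / q - (k / q) / p = c / q := by
        rw [Nat.div_div_eq_div_mul]
        exact floor_id p q k hp.pos hqprime.pos hqc
      -- recurrence on LHS : coprime to p*P = q*(p*P')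
      have hLrec := card_step k (p * P') q hqprime hqpP'
      have hLeq : (Icc 1 k).filter (fun x => Nat.Coprime x (q * (p * P')))
          = (Icc 1 k).filter (fun x => Nat.Coprime x (p * P)) :=
        Finset.filter_congr (fun x _ => by rw [hP']; ring_nf)
      -- recurrence on RHS : coprime to P = q*P'
      have hRrec := card_step c P' q hqprime hqP'
      have hReq : (Icc 1 c).filter (fun x => Nat.Coprime x (q * P'))
          = (Icc 1 c).filter (fun x => Nat.Coprime x P) :=
        Finset.filter_congr (fun x _ => by rw [hP'])
      -- IH1
      have hIH1 : ((Icc 1 k).filter (fun x => Nat.Coprime x (p * P'))).card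
          = ((Icc 1 c).filter (fun x => Nat.Coprime x P')).card :=
        ih P' hP'lt k hk hP'pos hpP'
          (fun r hr hrP' => hPc r hr (hP' ▸ Dvd.dvd.mul_left hrP' q))
      -- IH2 with k' = k/q
      have hIH2 : ((Icc 1 (k / q)).filter (fun x => Nat.Coprime x (p * P'))).card
          = ((Icc 1 (c / q)).filter (fun x => Nat.Coprime x P')).card := by
        have := ih P' hP'lt (k / q) hkq1 hP'pos hpP' ?_
        · rwa [hfi] at this
        · intro r hr hrP'
          rw [hfi]
          have hrc : r ∣ c := hPc r hr (hP' ▸ Dvd.dvd.mul_left hrP' q)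
          have hrq : r ≠ q := fun h => hqP' (h ▸ hrP')
          have : Nat.Coprime r q :=
            (Nat.coprime_primes hr hqprime).mpr hrq
          have hcq : c = (c / q) * q := (Nat.div_mul_cancel hqc).symm
          exact Nat.Coprime.dvd_of_dvd_mul_right this (hcq ▸ hrc)
      rw [hLeq] at hLrec
      rw [hReq] at hRrec
      omega

/-- Let `c = k − ⌊k/p⌋`, and let `P` be coprime to `p` with every prime divisor of `P`
dividing `c`. Then `#{x ∈ [1, k] : gcd(x, pP) = 1} = #{x ∈ [1, c] : gcd(x, P) = 1}`. -/
theorem card_coprime_Icc_eq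
    (p k P : ℕ) (hp : p.Prime) (hk : 1 ≤ k) (hP : 1 ≤ P)
    (hpP : ¬ p ∣ P) (hPc : ∀ q : ℕ, q.Prime → q ∣ P → q ∣ (k - k / p)) :
    ((Finset.Icc 1 k).filter (fun x => Nat.Coprime x (p * P))).card
      = ((Finset.Icc 1 (k - k / p)).filter (fun x => Nat.Coprime x P)).card := by
  exact aux_main p hp P k hk hP hpP hPc
end

section
/- Let p be a prime, let k ≥ 1 be an integer, and set c = k − ⌊k/p⌋. Let P ≥ 1 be an integer with p ∤ P such that every prime divisor of P divides c. Then the number of integers x with 1 ≤ x ≤ k and gcd(x, P) = 1 equals the number of integers x with 1 ≤ x ≤ ⌊k/p⌋ and gcd(x, P) = 1 plus the number of integers x with 1 ≤ x ≤ c and gcd(x, P) = 1. -/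
/-- Let `c = k − ⌊k/p⌋`, and let `P` be coprime to `p` with every prime divisor of `P`
dividing `c`. Then `#{x ∈ [1, k] : gcd(x, P) = 1}` equals
`#{x ∈ [1, ⌊k/p⌋] : gcd(x, P) = 1} + #{x ∈ [1, c] : gcd(x, P) = 1}`. -/
theorem card_coprime_Icc_add
    (p k P : ℕ) (hp : p.Prime) (hk : 1 ≤ k) (hP : 1 ≤ P)
    (hpP : ¬ p ∣ P) (hPc : ∀ q : ℕ, q.Prime → q ∣ P → q ∣ (k - k / p)) :
    ((Finset.Icc 1 k).filter (fun x => Nat.Coprime x P)).card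
      = ((Finset.Icc 1 (k / p)).filter (fun x => Nat.Coprime x P)).card
        + ((Finset.Icc 1 (k - k / p)).filter (fun x => Nat.Coprime x P)).card := by
  have hdl : k / p < k := Nat.div_lt_self hk hp.one_lt
  generalize hq : k / p = m at hdl hPc ⊢
  set c := k - m with hc
  clear_value c
  have hck : c + m = k := by omega
  have key : ∀ x : ℕ, Nat.Coprime (x + c) P ↔ Nat.Coprime x P := by
    intro x
    rw [← not_iff_not, Nat.Prime.not_coprime_iff_dvd, Nat.Prime.not_coprime_iff_dvd]
    constructor
    · rintro ⟨q, hq, hqx, hqP⟩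
      exact ⟨q, hq, (Nat.dvd_add_right (hPc q hq hqP)).mp (by rwa [add_comm] at hqx), hqP⟩
    · rintro ⟨q, hq, hqx, hqP⟩
      exact ⟨q, hq, Dvd.dvd.add hqx (hPc q hq hqP), hqP⟩
  have hsplit : Finset.Icc 1 k = Finset.Ioc c k ∪ Finset.Icc 1 c := by
    ext x
    simp only [Finset.mem_union, Finset.mem_Icc, Finset.mem_Ioc]
    omega
  have hdisj : Disjoint ((Finset.Ioc c k).filter (fun x => Nat.Coprime x P))
      ((Finset.Icc 1 c).filter (fun x => Nat.Coprime x P)) := by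
    apply Finset.disjoint_filter_filter
    simp only [Finset.disjoint_left, Finset.mem_Ioc, Finset.mem_Icc]
    omega
  rw [hsplit, Finset.filter_union, Finset.card_union_of_disjoint hdisj]
  congr 1
  apply Finset.card_bij (fun x _ => x - c)
  · intro a ha
    simp only [Finset.mem_filter, Finset.mem_Ioc, Finset.mem_Icc] at ha ⊢
    refine ⟨⟨by omega, by omega⟩, ?_⟩
    exact (key (a - c)).mp (by rw [Nat.sub_add_cancel (by omega)]; exact ha.2)
  · intro a ha b hb hab
    simp only [Finset.mem_filter, Finset.mem_Ioc] at ha hb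
    omega
  · intro b hb
    simp only [Finset.mem_filter, Finset.mem_Icc] at hb
    refine ⟨b + c, ?_, by omega⟩
    simp only [Finset.mem_filter, Finset.mem_Ioc]
    exact ⟨⟨by omega, by omega⟩, (key b).mpr hb.2⟩
end

section
/- Let p be a prime and let α ≥ 1, m ≥ 1, d ≥ 1, k ≥ 1, n ≥ 1 be integers such that every prime divisor of m is greater than p, (α, m) ≠ (1, 1), k − ⌊k/p⌋ = p^{α−1} · d · m, and k·n + 1 = p^α · m. Then k > n. -/
/-- If every prime divisor of `m` exceeds `p`, `(α, m) ≠ (1, 1)`,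
`k − ⌊k/p⌋ = p^{α−1} d m`, and `kn + 1 = p^α m`, then `k > n`. -/
theorem k_gt_n_of_arith
    (p α m d k n : ℕ) (hp : p.Prime) (hα : 1 ≤ α) (hm : 1 ≤ m)
    (hd : 1 ≤ d) (hk : 1 ≤ k) (hn : 1 ≤ n)
    (hmp : ∀ q : ℕ, q.Prime → q ∣ m → p < q)
    (hne : ¬ (α = 1 ∧ m = 1))
    (h1 : k - k / p = p ^ (α - 1) * d * m)
    (h2 : k * n + 1 = p ^ α * m) :
    k > n := by
  have hle : p ^ (α - 1) * d * m ≤ k := h1 ▸ Nat.sub_le _ _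
  have hpa : p ^ α = p * p ^ (α - 1) := by
    conv_lhs => rw [← Nat.succ_pred_eq_of_pos hα]
    rw [pow_succ, mul_comm]; rfl
  have h3 : k * n + 1 ≤ p * k := by
    calc k * n + 1 = p * (p ^ (α - 1) * m) := by rw [h2, hpa]; ring
      _ ≤ p * (p ^ (α - 1) * d * m) := by
          apply Nat.mul_le_mul_left
          calc p ^ (α - 1) * m = p ^ (α - 1) * 1 * m := by ring
            _ ≤ p ^ (α - 1) * d * m :=
              Nat.mul_le_mul_right _ (Nat.mul_le_mul_left _ hd)
      _ ≤ p * k := Nat.mul_le_mul_left _ hle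
  have hnp : n < p := by
    by_contra h
    push_neg at h
    have : p * k ≤ n * k := Nat.mul_le_mul_right _ h
    nlinarith
  rcases eq_or_lt_of_le hα with hα1 | hα2
  · -- α = 1
    have hm1 : m ≠ 1 := fun h => hne ⟨hα1.symm, h⟩
    obtain ⟨q, hq, hqm⟩ := Nat.exists_prime_and_dvd hm1
    have hpq := hmp q hq hqm
    have hqle : q ≤ m := Nat.le_of_dvd (by omega) hqm
    have hmk : m ≤ k := by
      rw [← hα1] at hle
      simp only [Nat.sub_self, pow_zero, one_mul] at hle
      calc m = 1 * m := (one_mul m).symm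
        _ ≤ d * m := Nat.mul_le_mul_right _ hd
        _ ≤ k := hle
    omega
  · -- α ≥ 2
    have hps : p ≤ p ^ (α - 1) := Nat.le_self_pow (by omega) p
    have : p ≤ k := by
      calc p ≤ p ^ (α - 1) := hps
        _ = p ^ (α - 1) * 1 * 1 := by ring
        _ ≤ p ^ (α - 1) * d * m :=
            Nat.mul_le_mul (Nat.mul_le_mul_left _ hd) hm
        _ ≤ k := hle
    omega
end
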